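/- arXiv:2009.04349 — 2 statements merged into one kernel-verified Lean document; each statement's English description precedes it below -/
import Mathlib

section
/- Let Q₁, Q₂ be key polynomials for ν of the same degree with ν(Q₁) ≤ ν(Q₂). Then for every nonzero f ∈ K[x]: ν_{Q₁}(f) ≤ ν_{Q₂}(f) ≤ ν(f), and δ_{Q₂}(f) ≤ δ_{Q₁}(f). -/
open Polynomial

variable {K : Type*} [Field K]

/-- `ν` is a (rank one, real-valued) valuation on `K[x]`, specified on nonzero
polynomials. -/
def IsVal {K : Type*} [Field K] (ν : Polynomial K → ℝ) : Prop :=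
  (∀ f g : Polynomial K, f ≠ 0 → g ≠ 0 → ν (f * g) = ν f + ν g) ∧
  (∀ f g : Polynomial K, f ≠ 0 → g ≠ 0 → f + g ≠ 0 → min (ν f) (ν g) ≤ ν (f + g))

/-- The level `ε(f)` of a nonzero polynomial: the maximum of
`(ν f - ν (∂_b f))/b` over `b ≥ 1` (with `∂_b` the Hasse derivatives). -/
noncomputable def eps {K : Type*} [Field K] (ν : Polynomial K → ℝ) (f : Polynomial K) : ℝ :=
  sSup {r : ℝ | ∃ b : ℕ, 1 ≤ b ∧ hasseDeriv b f ≠ 0 ∧ r = (ν f - ν (hasseDeriv b f)) / b}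

/-- The set `I(f)` of indices where the bound `ν(∂_b f) ≥ ν f - b ε(f)` is an equality. -/
def Iset {K : Type*} [Field K] (ν : Polynomial K → ℝ) (f : Polynomial K) : Set ℕ :=
  {b | 1 ≤ b ∧ hasseDeriv b f ≠ 0 ∧ ν (hasseDeriv b f) = ν f - b * eps ν f}

/-- `Q` is a key polynomial for `ν`. -/
def IsKeyPol {K : Type*} [Field K] (ν : Polynomial K → ℝ) (Q : Polynomial K) : Prop :=
  Q.Monic ∧ 0 < Q.natDegree ∧
    ∀ f : Polynomial K, f ≠ 0 → f.natDegree < Q.natDegree → eps ν f < eps ν Q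

/-- The coefficients of the `Q`-expansion of `f`:  `f = Σ i, qc Q f i * Q ^ i`
with `deg (qc Q f i) < deg Q`. -/
noncomputable def qc {K : Type*} [Field K] (Q : Polynomial K) : Polynomial K → ℕ → Polynomial K
  | f, 0 => f %ₘ Q
  | f, (i + 1) => qc Q (f /ₘ Q) i

/-- The degree of the `Q`-expansion of `f`. -/
def degQ {K : Type*} [Field K] (Q f : Polynomial K) : ℕ := f.natDegree / Q.natDegree

/-- The truncation `ν_Q(f) = min_i ν (f_i Q^i)` of `ν` at `Q`. -/
noncomputable def nuQ {K : Type*} [Field K] (ν : Polynomial K → ℝ) (Q f : Polynomial K) : ℝ :=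
  sInf {r : ℝ | ∃ i : ℕ, qc Q f i ≠ 0 ∧ r = ν (qc Q f i * Q ^ i)}

/-- The set `S_Q(f)` of indices attaining the minimum in `ν_Q(f)`. -/
def SQ {K : Type*} [Field K] (ν : Polynomial K → ℝ) (Q f : Polynomial K) : Set ℕ :=
  {i | qc Q f i ≠ 0 ∧ ν (qc Q f i * Q ^ i) = nuQ ν Q f}

/-- `δ_Q(f) = max S_Q(f)`. -/
noncomputable def deltaQ {K : Type*} [Field K] (ν : Polynomial K → ℝ) (Q f : Polynomial K) : ℕ :=
  sSup (SQ ν Q f)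

/-- The set `Ψ_α` of key polynomials for `ν` of degree `α`. -/
def Psi {K : Type*} [Field K] (ν : Polynomial K → ℝ) (α : ℕ) : Set (Polynomial K) :=
  {Q | IsKeyPol ν Q ∧ Q.natDegree = α}

/-- The set `S_α` of (nonzero) polynomials whose value is not computed by any
truncation at a key polynomial of degree `α`. -/
def Slim {K : Type*} [Field K] (ν : Polynomial K → ℝ) (α : ℕ) : Set (Polynomial K) :=
  {f | f ≠ 0 ∧ ∀ Q ∈ Psi ν α, nuQ ν Q f < ν f}

/-- `p` is the characteristic exponent of the residue field of `ν`: either `p = 1`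
and all nonzero natural numbers have value `0`, or `p` is a prime, `p` has
positive value (or is `0` in `K`), and naturals prime to `p` have value `0`. -/
def CharExp {K : Type*} [Field K] (ν : Polynomial K → ℝ) (p : ℕ) : Prop :=
  (p = 1 ∧ ∀ n : ℕ, (n : Polynomial K) ≠ 0 → ν (n : Polynomial K) = 0) ∨
  (p.Prime ∧ ((p : Polynomial K) = 0 ∨ 0 < ν (p : Polynomial K)) ∧
    ∀ n : ℕ, ¬ p ∣ n → ν (n : Polynomial K) = 0)

section ValBasics

variable {ν : Polynomial K → ℝ}

theorem IsVal.val_one (hν : IsVal ν) : ν 1 = 0 := by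
  have h := hν.1 1 1 one_ne_zero one_ne_zero
  rw [mul_one] at h; linarith

theorem IsVal.val_neg (hν : IsVal ν) {a : Polynomial K} (ha : a ≠ 0) : ν (-a) = ν a := by
  have hm1 : ν (-1 : Polynomial K) = 0 := by
    have h := hν.1 (-1) (-1) (neg_ne_zero.2 one_ne_zero) (neg_ne_zero.2 one_ne_zero)
    rw [neg_mul_neg, one_mul, hν.val_one] at h; linarith
  have := hν.1 (-1) a (neg_ne_zero.2 one_ne_zero) ha
  rw [neg_one_mul] at this
  rw [this, hm1, zero_add]

/-- dominant term: adding a strictly larger-value (or zero) term keeps value. -/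
theorem IsVal.add_dom (hν : IsVal ν) {a b : Polynomial K} (ha : a ≠ 0)
    (hb : b ≠ 0 → ν a < ν b) : a + b ≠ 0 ∧ ν (a + b) = ν a := by
  rcases eq_or_ne b 0 with rfl | hbne
  · simpa using ha
  have hb : ν a < ν b := hb hbne
  have hne : a + b ≠ 0 := by
    intro h
    have : b = -a := by linear_combination h
    rw [this, hν.val_neg ha] at hb; exact lt_irrefl _ hb
  constructor
  · exact hne
  have h1 : ν a ≤ ν (a + b) := by
    have := hν.2 a b ha hbne hne
    rwa [min_eq_left hb.le] at this
  have h2 : ν (a + b) ≤ ν a := by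
    by_contra hcon
    push_neg at hcon
    have hab : a + b ≠ 0 := hne
    have hba : (a + b) + (-b) = a := by ring
    have hnb : (-b : Polynomial K) ≠ 0 := neg_ne_zero.2 hbne
    have := hν.2 (a + b) (-b) hab hnb (by rw [hba]; exact ha)
    rw [hba, hν.val_neg hbne] at this
    have : min (ν (a + b)) (ν b) ≤ ν a := this
    rcases min_le_iff.1 this with h | h <;> linarith
  linarith

end ValBasics
section SumLemmas

variable {ν : Polynomial K → ℝ} {ι : Type*}

theorem IsVal.sum_le (hν : IsVal ν) {s : Finset ι} {g : ι → Polynomial K} {m : ℝ}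
    (h : ∀ i ∈ s, g i ≠ 0 → m ≤ ν (g i)) (hs : ∑ i ∈ s, g i ≠ 0) :
    m ≤ ν (∑ i ∈ s, g i) := by
  classical
  induction s using Finset.induction_on with
  | empty => simp at hs
  | insert a s hnotmem ih =>
    rw [Finset.sum_insert hnotmem] at hs ⊢
    rcases eq_or_ne (∑ i ∈ s, g i) 0 with hz | hz
    · rw [hz, add_zero] at hs ⊢
      exact h a (Finset.mem_insert_self a s) hs
    rcases eq_or_ne (g a) 0 with hz2 | hz2
    · rw [hz2, zero_add] at hs ⊢
      exact ih (fun i hi => h i (Finset.mem_insert_of_mem hi)) hz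
    have h1 := h a (Finset.mem_insert_self a s) hz2
    have h2 := ih (fun i hi => h i (Finset.mem_insert_of_mem hi)) hz
    have := hν.2 (g a) (∑ i ∈ s, g i) hz2 hz hs
    rcases min_le_iff.1 this with hle | hle <;> linarith

theorem IsVal.sum_lt (hν : IsVal ν) {s : Finset ι} {g : ι → Polynomial K} {m : ℝ}
    (h : ∀ i ∈ s, g i ≠ 0 → m < ν (g i)) (hs : ∑ i ∈ s, g i ≠ 0) :
    m < ν (∑ i ∈ s, g i) := by
  classical
  induction s using Finset.induction_on with
  | empty => simp at hs
  | insert a s hnotmem ih =>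
    rw [Finset.sum_insert hnotmem] at hs ⊢
    rcases eq_or_ne (∑ i ∈ s, g i) 0 with hz | hz
    · rw [hz, add_zero] at hs ⊢
      exact h a (Finset.mem_insert_self a s) hs
    rcases eq_or_ne (g a) 0 with hz2 | hz2
    · rw [hz2, zero_add] at hs ⊢
      exact ih (fun i hi => h i (Finset.mem_insert_of_mem hi)) hz
    have h1 := h a (Finset.mem_insert_self a s) hz2
    have h2 := ih (fun i hi => h i (Finset.mem_insert_of_mem hi)) hz
    have := hν.2 (g a) (∑ i ∈ s, g i) hz2 hz hs
    rcases min_le_iff.1 this with hle | hle <;> linarith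

/-- dominant term in a finite sum -/
theorem IsVal.sum_dom (hν : IsVal ν) {s : Finset ι} {g : ι → Polynomial K} {a : ι}
    (has : a ∈ s) (hga : g a ≠ 0)
    (h : ∀ i ∈ s, i ≠ a → g i ≠ 0 → ν (g a) < ν (g i)) :
    (∑ i ∈ s, g i) ≠ 0 ∧ ν (∑ i ∈ s, g i) = ν (g a) := by
  classical
  have hsplit : ∑ i ∈ s, g i = g a + ∑ i ∈ s.erase a, g i := by
    rw [Finset.add_sum_erase s g has]
  rw [hsplit]
  refine hν.add_dom hga (fun hne => ?_)
  refine hν.sum_lt (fun i hi hgi => ?_) hne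
  exact h i (Finset.mem_of_mem_erase hi) (Finset.ne_of_mem_erase hi) hgi

theorem IsVal.natCast_nonneg (hν : IsVal ν) {n : ℕ} (h : (n : Polynomial K) ≠ 0) :
    0 ≤ ν (n : Polynomial K) := by
  induction n with
  | zero => simp at h
  | succ k ih =>
    push_cast
    rcases eq_or_ne (k : Polynomial K) 0 with hk | hk
    · rw [hk, zero_add, hν.val_one]
    have hne : (k : Polynomial K) + 1 ≠ 0 := by push_cast at h; exact h
    have := hν.2 (k : Polynomial K) 1 hk one_ne_zero hne
    have hik := ih hk
    rw [hν.val_one] at this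
    rcases min_le_iff.1 this with hle | hle <;> linarith

theorem IsVal.val_mul_pow (hν : IsVal ν) {a g : Polynomial K} (ha : a ≠ 0) (hg : g ≠ 0)
    (i : ℕ) : ν (a * g ^ i) = ν a + i * ν g := by
  induction i with
  | zero => simp
  | succ k ih =>
    have h1 : a * g ^ (k + 1) = (a * g ^ k) * g := by ring
    rw [h1, hν.1 _ g (mul_ne_zero ha (pow_ne_zero _ hg)) hg, ih]
    push_cast; ring

end SumLemmas
section QcLemmas

variable {Q : Polynomial K}

theorem qc_zero_poly (Q : Polynomial K) : ∀ i, qc Q 0 i = 0 := by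
  intro i
  induction i with
  | zero => simp [qc]
  | succ k ih => simp only [qc, zero_divByMonic]; exact ih

theorem add_divByMonic (hQ : Q.Monic) (a b : Polynomial K) :
    (a + b) /ₘ Q = a /ₘ Q + b /ₘ Q := by
  refine (Polynomial.div_modByMonic_unique _ (a %ₘ Q + b %ₘ Q) hQ ⟨?_, ?_⟩).1
  · rw [mul_add]
    have ha := Polynomial.modByMonic_add_div a Q
    have hb := Polynomial.modByMonic_add_div b Q
    linear_combination ha + hb
  · exact (Polynomial.degree_add_le _ _).trans_lt
      (max_lt (Polynomial.degree_modByMonic_lt _ hQ) (Polynomial.degree_modByMonic_lt _ hQ))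

theorem qc_add (hQ : Q.Monic) (a b : Polynomial K) :
    ∀ i, qc Q (a + b) i = qc Q a i + qc Q b i := by
  intro i
  induction i generalizing a b with
  | zero => simp [qc, Polynomial.add_modByMonic]
  | succ k ih => simp only [qc, add_divByMonic hQ]; exact ih _ _

theorem qc_sum' (hQ : Q.Monic) {ι : Type*} (s : Finset ι) (g : ι → Polynomial K) (i : ℕ) :
    qc Q (∑ j ∈ s, g j) i = ∑ j ∈ s, qc Q (g j) i := by
  classical
  induction s using Finset.induction_on with
  | empty => simp [qc_zero_poly]
  | insert a s hnotmem ih =>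
    rw [Finset.sum_insert hnotmem, Finset.sum_insert hnotmem, qc_add hQ, ih]

theorem qc_small_zero (hQ : Q.Monic) {g : Polynomial K} (hg : g.degree < Q.degree) :
    qc Q g 0 = g := by
  simp only [qc]; exact (Polynomial.modByMonic_eq_self_iff hQ).2 hg

theorem qc_small_succ (hQ : Q.Monic) {g : Polynomial K} (hg : g.degree < Q.degree) (k : ℕ) :
    qc Q g (k + 1) = 0 := by
  simp only [qc]
  rw [(Polynomial.divByMonic_eq_zero_iff hQ).2 hg]
  exact qc_zero_poly Q k

theorem qc_shift_zero (hQ : Q.Monic) (g : Polynomial K) : qc Q (g * Q) 0 = 0 := by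
  simp only [qc]
  exact (Polynomial.modByMonic_eq_zero_iff_dvd hQ).2 (dvd_mul_left Q g)

theorem qc_shift_succ (hQ : Q.Monic) (g : Polynomial K) (i : ℕ) :
    qc Q (g * Q) (i + 1) = qc Q g i := by
  simp only [qc]
  rw [mul_comm g Q, Polynomial.mul_divByMonic_cancel_left g hQ]

theorem qc_mul_pow (hQ : Q.Monic) (x : Polynomial K) :
    ∀ (k i : ℕ), qc Q (x * Q ^ k) i = if k ≤ i then qc Q x (i - k) else 0 := by
  intro k
  induction k generalizing x with
  | zero => intro i; simp
  | succ m ih =>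
    intro i
    have hx : x * Q ^ (m + 1) = (x * Q ^ m) * Q := by ring
    cases i with
    | zero =>
      rw [hx, qc_shift_zero hQ]
      simp
    | succ n =>
      rw [hx, qc_shift_succ hQ, ih]
      simp only [Nat.succ_sub_succ]
      congr 1
      simp [Nat.succ_le_succ_iff]

theorem qc_degree_lt (hQ : Q.Monic) (f : Polynomial K) :
    ∀ i, (qc Q f i).degree < Q.degree := by
  intro i
  induction i generalizing f with
  | zero => exact Polynomial.degree_modByMonic_lt _ hQ
  | succ k ih => exact ih _

theorem qc_ne_zero_imp (hQ : Q.Monic) (hQd : 0 < Q.natDegree) {f : Polynomial K} :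
    ∀ i, qc Q f i ≠ 0 → i * Q.natDegree ≤ f.natDegree ∧ f ≠ 0 := by
  intro i
  induction i generalizing f with
  | zero =>
    intro h
    refine ⟨by simp, ?_⟩
    · rintro rfl; exact h (qc_zero_poly Q 0)
  | succ k ih =>
    intro h
    have h' : qc Q (f /ₘ Q) k ≠ 0 := h
    obtain ⟨h1, h2⟩ := ih h'
    have hfd : ¬ (f.degree < Q.degree) := by
      intro hc
      exact h2 ((Polynomial.divByMonic_eq_zero_iff hQ).2 hc)
    have hQle : Q.natDegree ≤ f.natDegree := by
      have := Polynomial.natDegree_le_natDegree (le_of_not_gt hfd)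
      exact this
    have hdd : (f /ₘ Q).natDegree = f.natDegree - Q.natDegree :=
      Polynomial.natDegree_divByMonic f hQ
    rw [hdd] at h1
    have hmul : (k + 1) * Q.natDegree = k * Q.natDegree + Q.natDegree := by ring
    constructor
    · omega
    · rintro rfl
      exact h2 (by rw [Polynomial.zero_divByMonic])

theorem qc_idx_le (hQ : Q.Monic) (hQd : 0 < Q.natDegree) {f : Polynomial K} {i : ℕ}
    (h : qc Q f i ≠ 0) : i ≤ f.natDegree := by
  obtain ⟨h1, _⟩ := qc_ne_zero_imp hQ hQd i h
  calc i = i * 1 := by omega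
  _ ≤ i * Q.natDegree := Nat.mul_le_mul_left _ hQd
  _ ≤ f.natDegree := h1

theorem qc_sum_eq (hQ : Q.Monic) (hQd : 0 < Q.natDegree) :
    ∀ (N : ℕ) (f : Polynomial K), f.natDegree ≤ N →
      ∑ i ∈ Finset.range (N + 1), qc Q f i * Q ^ i = f := by
  intro N
  induction N with
  | zero =>
    intro f hf
    have hdeg : f.degree < Q.degree := by
      rcases eq_or_ne f 0 with rfl | hf0
      · rw [Polynomial.degree_zero]
        exact bot_lt_iff_ne_bot.2 (fun hc => hQ.ne_zero (Polynomial.degree_eq_bot.1 hc))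
      · rw [Polynomial.degree_eq_natDegree hf0, Polynomial.degree_eq_natDegree hQ.ne_zero]
        exact_mod_cast lt_of_le_of_lt hf hQd
    simp [qc_small_zero hQ hdeg]
  | succ N ih =>
    intro f hf
    rw [Finset.sum_range_succ']
    have h0 : qc Q f 0 * Q ^ 0 = f %ₘ Q := by simp [qc]
    have hrest : ∀ i, qc Q f (i + 1) * Q ^ (i + 1) = (qc Q (f /ₘ Q) i * Q ^ i) * Q := by
      intro i; simp only [qc]; ring
    rw [h0]
    calc (∑ i ∈ Finset.range (N + 1), qc Q f (i + 1) * Q ^ (i + 1)) + f %ₘ Q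
        = (∑ i ∈ Finset.range (N + 1), qc Q (f /ₘ Q) i * Q ^ i) * Q + f %ₘ Q := by
          rw [Finset.sum_mul]
          congr 1
          exact Finset.sum_congr rfl (fun i _ => hrest i)
      _ = (f /ₘ Q) * Q + f %ₘ Q := by
          congr 1
          rcases eq_or_ne f 0 with rfl | hf0
          · simp [Polynomial.zero_divByMonic, Finset.sum_congr, qc_zero_poly]
          · congr 1
            apply ih
            rw [Polynomial.natDegree_divByMonic f hQ]
            omega
      _ = f := by rw [mul_comm]; linear_combination Polynomial.modByMonic_add_div f Q
end QcLemmas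
section NuLemmas

variable {ν : Polynomial K → ℝ} {Q f : Polynomial K}

theorem nuQ_spec (hQ : Q.Monic) (hQd : 0 < Q.natDegree) (hf : f ≠ 0) :
    (∃ i, qc Q f i ≠ 0 ∧ ν (qc Q f i * Q ^ i) = nuQ ν Q f) ∧
      (∀ i, qc Q f i ≠ 0 → nuQ ν Q f ≤ ν (qc Q f i * Q ^ i)) := by
  set S := {r : ℝ | ∃ i : ℕ, qc Q f i ≠ 0 ∧ r = ν (qc Q f i * Q ^ i)} with hS
  have hfin : S.Finite := by
    apply Set.Finite.subset (Set.Finite.image (fun i => ν (qc Q f i * Q ^ i))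
      (Set.finite_Iic f.natDegree))
    rintro r ⟨i, hi, rfl⟩
    exact ⟨i, qc_idx_le hQ hQd hi, rfl⟩
  have hne : S.Nonempty := by
    by_contra hc
    rw [Set.not_nonempty_iff_eq_empty] at hc
    apply hf
    rw [← qc_sum_eq hQ hQd f.natDegree f le_rfl]
    apply Finset.sum_eq_zero
    intro i _
    rcases eq_or_ne (qc Q f i) 0 with hz | hz
    · rw [hz, zero_mul]
    · exfalso
      have hmem : ν (qc Q f i * Q ^ i) ∈ S := ⟨i, hz, rfl⟩
      rw [hc] at hmem
      exact Set.notMem_empty _ hmem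
  constructor
  · have := hne.csInf_mem hfin
    obtain ⟨i, hi, heq⟩ := this
    exact ⟨i, hi, heq.symm⟩
  · intro i hi
    exact csInf_le hfin.bddBelow ⟨i, hi, rfl⟩

theorem nuQ_le_val (hν : IsVal ν) (hQ : Q.Monic) (hQd : 0 < Q.natDegree) (hf : f ≠ 0) :
    nuQ ν Q f ≤ ν f := by
  conv_rhs => rw [← qc_sum_eq hQ hQd f.natDegree f le_rfl]
  apply hν.sum_le
  · intro i _ hne
    have hqc : qc Q f i ≠ 0 := fun hc => hne (by rw [hc, zero_mul])
    exact (nuQ_spec hQ hQd hf).2 i hqc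
  · rw [qc_sum_eq hQ hQd f.natDegree f le_rfl]; exact hf

theorem deltaQ_spec (hQ : Q.Monic) (hQd : 0 < Q.natDegree) (hf : f ≠ 0) :
    deltaQ ν Q f ∈ SQ ν Q f ∧ ∀ j ∈ SQ ν Q f, j ≤ deltaQ ν Q f := by
  have hbdd : BddAbove (SQ ν Q f) := by
    refine ⟨f.natDegree, fun j hj => ?_⟩
    exact qc_idx_le hQ hQd hj.1
  have hne : (SQ ν Q f).Nonempty := by
    obtain ⟨i, hi, heq⟩ := (nuQ_spec (ν := ν) hQ hQd hf).1
    exact ⟨i, hi, heq⟩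
  exact ⟨Nat.sSup_mem hne hbdd, fun j hj => le_csSup hbdd hj⟩

end NuLemmas

section EpsLemmas

variable {ν : Polynomial K → ℝ} {f Q : Polynomial K}

theorem hasseDeriv_ne_zero_imp {b : ℕ} (h : Polynomial.hasseDeriv b f ≠ 0) :
    b ≤ f.natDegree := by
  by_contra hc
  push_neg at hc
  apply h
  ext n
  rw [Polynomial.hasseDeriv_coeff, Polynomial.coeff_eq_zero_of_natDegree_lt (by omega),
    Polynomial.coeff_zero, mul_zero]

theorem eps_set_finite (ν : Polynomial K → ℝ) (f : Polynomial K) :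
    {r : ℝ | ∃ b : ℕ, 1 ≤ b ∧ Polynomial.hasseDeriv b f ≠ 0 ∧
      r = (ν f - ν (Polynomial.hasseDeriv b f)) / b}.Finite := by
  apply Set.Finite.subset (Set.Finite.image
    (fun b : ℕ => (ν f - ν (Polynomial.hasseDeriv b f)) / b) (Set.finite_Iic f.natDegree))
  rintro r ⟨b, hb1, hbne, rfl⟩
  exact ⟨b, hasseDeriv_ne_zero_imp hbne, rfl⟩

theorem eps_bound (ν : Polynomial K → ℝ) (f : Polynomial K) (d : ℕ)
    (hd : Polynomial.hasseDeriv d f ≠ 0) :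
    ν f - d * eps ν f ≤ ν (Polynomial.hasseDeriv d f) := by
  rcases Nat.eq_zero_or_pos d with rfl | hd1
  · rw [Polynomial.hasseDeriv_zero'] ; push_cast; linarith
  have hmem : (ν f - ν (Polynomial.hasseDeriv d f)) / d ∈
      {r : ℝ | ∃ b : ℕ, 1 ≤ b ∧ Polynomial.hasseDeriv b f ≠ 0 ∧
        r = (ν f - ν (Polynomial.hasseDeriv b f)) / b} := ⟨d, hd1, hd, rfl⟩
  have hle := le_csSup (eps_set_finite ν f).bddAbove hmem
  have hdpos : (0 : ℝ) < d := by exact_mod_cast hd1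
  rw [div_le_iff₀ hdpos] at hle
  have heps : eps ν f = sSup {r : ℝ | ∃ b : ℕ, 1 ≤ b ∧ Polynomial.hasseDeriv b f ≠ 0 ∧
      r = (ν f - ν (Polynomial.hasseDeriv b f)) / b} := rfl
  rw [← heps] at hle
  nlinarith [hle]

theorem eps_attained (ν : Polynomial K → ℝ) (hQm : Q.Monic) (hQd : 0 < Q.natDegree) :
    ∃ b : ℕ, 1 ≤ b ∧ Polynomial.hasseDeriv b Q ≠ 0 ∧
      ν (Polynomial.hasseDeriv b Q) = ν Q - b * eps ν Q := by
  have hQne : Q ≠ 0 := hQm.ne_zero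
  have hder : Polynomial.hasseDeriv Q.natDegree Q ≠ 0 := by
    intro hc
    have h0 : (Polynomial.hasseDeriv Q.natDegree Q).coeff 0 = Q.coeff Q.natDegree := by
      rw [Polynomial.hasseDeriv_coeff, zero_add, Nat.choose_self]
      push_cast; rw [one_mul]
    rw [hc, Polynomial.coeff_zero] at h0
    exact Polynomial.leadingCoeff_ne_zero.2 hQne h0.symm
  have hne : {r : ℝ | ∃ b : ℕ, 1 ≤ b ∧ Polynomial.hasseDeriv b Q ≠ 0 ∧
      r = (ν Q - ν (Polynomial.hasseDeriv b Q)) / b}.Nonempty :=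
    ⟨_, Q.natDegree, hQd, hder, rfl⟩
  have hmem := hne.csSup_mem (eps_set_finite ν Q)
  have heps : eps ν Q = sSup {r : ℝ | ∃ b : ℕ, 1 ≤ b ∧ Polynomial.hasseDeriv b Q ≠ 0 ∧
      r = (ν Q - ν (Polynomial.hasseDeriv b Q)) / b} := rfl
  rw [← heps] at hmem
  obtain ⟨b, hb1, hbne, heq⟩ := hmem
  refine ⟨b, hb1, hbne, ?_⟩
  have hbpos : (0 : ℝ) < b := by exact_mod_cast hb1
  rw [eq_div_iff (ne_of_gt hbpos)] at heq
  linarith [heq]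

end EpsLemmas
section CoreLemmas

open Polynomial

variable {ν : Polynomial K → ℝ} {Q : Polynomial K}

/-- Leibniz-type bound : for a product of two nonzero polynomials whose levels are `≤ E`,
all Hasse derivatives satisfy `ν (∂_b (uv)) ≥ ν (uv) - b E`. -/
theorem eps_mul_bound (hν : IsVal ν) {u v : Polynomial K} (hu : u ≠ 0) (hv : v ≠ 0)
    {E : ℝ} (hEu : eps ν u ≤ E) (hEv : eps ν v ≤ E) (b : ℕ)
    (hD : Polynomial.hasseDeriv b (u * v) ≠ 0) :
    ν (u * v) - b * E ≤ ν (Polynomial.hasseDeriv b (u * v)) := by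
  rw [Polynomial.hasseDeriv_mul] at hD ⊢
  apply hν.sum_le _ hD
  rintro ⟨c, d⟩ hcd hne
  have hcdb : c + d = b := Finset.HasAntidiagonal.mem_antidiagonal.1 hcd
  have hc : Polynomial.hasseDeriv c u ≠ 0 := fun h => hne (by simp [h])
  have hd : Polynomial.hasseDeriv d v ≠ 0 := fun h => hne (by simp [h])
  have h1 := eps_bound ν u c hc
  have h2 := eps_bound ν v d hd
  have hcE : (c : ℝ) * eps ν u ≤ c * E := by
    apply mul_le_mul_of_nonneg_left hEu (by positivity)
  have hdE : (d : ℝ) * eps ν v ≤ d * E := by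
    apply mul_le_mul_of_nonneg_left hEv (by positivity)
  have hmul : ν (Polynomial.hasseDeriv c u * Polynomial.hasseDeriv d v)
      = ν (Polynomial.hasseDeriv c u) + ν (Polynomial.hasseDeriv d v) := hν.1 _ _ hc hd
  have hbE : (b : ℝ) * E = c * E + d * E := by
    have : ((c : ℝ) + d) = b := by exact_mod_cast congrArg (Nat.cast : ℕ → ℝ) hcdb
    rw [← this]; ring
  have huv : ν (u * v) = ν u + ν v := hν.1 u v hu hv
  rw [hmul, huv]
  linarith

/-- The crucial property of key polynomials : for `u, v` of degree `< deg Q`,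
the `Q`-expansion of `u*v` (which has length `≤ 2`) computes `ν (u*v)` through
its constant term, and the linear term has strictly larger value. -/
theorem prod_pkg (hν : IsVal ν) (hQ : IsKeyPol ν Q) {u v : Polynomial K}
    (hu : u ≠ 0) (hv : v ≠ 0) (hud : u.natDegree < Q.natDegree)
    (hvd : v.natDegree < Q.natDegree) :
    qc Q (u * v) 0 ≠ 0 ∧ ν (qc Q (u * v) 0) = ν (u * v) ∧
      (qc Q (u * v) 1 ≠ 0 → ν (u * v) < ν (qc Q (u * v) 1 * Q)) := by
  obtain ⟨hQm, hQd, hKey⟩ := hQ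
  have hQne : Q ≠ 0 := hQm.ne_zero
  have hP : u * v ≠ 0 := mul_ne_zero hu hv
  have hdivdeg : (u * v /ₘ Q).degree < Q.degree := by
    rcases eq_or_ne (u * v /ₘ Q) 0 with hz | hz
    · rw [hz, Polynomial.degree_zero]
      exact bot_lt_iff_ne_bot.2 fun hc => hQne (Polynomial.degree_eq_bot.1 hc)
    · rw [Polynomial.degree_eq_natDegree hz, Polynomial.degree_eq_natDegree hQne]
      have h1 : (u * v).natDegree ≤ u.natDegree + v.natDegree := Polynomial.natDegree_mul_le
      have h2 : (u * v /ₘ Q).natDegree = (u * v).natDegree - Q.natDegree :=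
        Polynomial.natDegree_divByMonic _ hQm
      exact_mod_cast by omega
  have hq1 : qc Q (u * v) 1 = u * v /ₘ Q := by
    show qc Q (u * v /ₘ Q) 0 = u * v /ₘ Q
    exact qc_small_zero hQm hdivdeg
  have hr0 : qc Q (u * v) 0 = u * v %ₘ Q := rfl
  set r := u * v %ₘ Q with hrdef
  set q := u * v /ₘ Q with hqdef
  have hsum : u * v = r + q * Q := by
    rw [mul_comm q Q]; linear_combination (Polynomial.modByMonic_add_div (u*v) Q).symm
  rw [hr0, hq1]
  rcases eq_or_ne q 0 with hq0 | hq0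
  · rw [hq0, zero_mul, add_zero] at hsum
    refine ⟨by rw [← hsum]; exact hP, by rw [← hsum], ?_⟩
    rw [hq0]; intro hc; exact absurd rfl hc
  have hrq : degree r < degree Q := Polynomial.degree_modByMonic_lt _ hQm
  have hqdeg : q.natDegree < Q.natDegree :=
    Polynomial.natDegree_lt_natDegree hq0 hdivdeg
  have hεq : eps ν q < eps ν Q := hKey q hq0 hqdeg
  have hεu : eps ν u < eps ν Q := hKey u hu hud
  have hεv : eps ν v < eps ν Q := hKey v hv hvd
  obtain ⟨b, hb1, hbne, hbval⟩ := eps_attained ν hQm hQd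
  set εQ := eps ν Q
  have hb0 : (0 : ℝ) < b := by exact_mod_cast hb1
  have hw : ν (q * Q) = ν q + ν Q := hν.1 q Q hq0 hQne
  -- the main claim : the remaining cases are contradictory
  have main : ∀ (_ : r = 0 ∨ (r ≠ 0 ∧ ν (q * Q) ≤ ν r)), False := by
    intro hcase
    have hself : u * v = q * Q + r := by rw [hsum]; ring
    have hDsum : Polynomial.hasseDeriv b (u * v) =
        (∑ cd ∈ Finset.HasAntidiagonal.antidiagonal b,
          Polynomial.hasseDeriv cd.1 q * Polynomial.hasseDeriv cd.2 Q) +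
        Polynomial.hasseDeriv b r := by
      rw [hself, map_add, Polynomial.hasseDeriv_mul]
    set m0 := ν q + ν Q - b * εQ with hm0
    -- the distinguished term of the antidiagonal sum
    have hterma : Polynomial.hasseDeriv (0:ℕ) q * Polynomial.hasseDeriv b Q = q *
        Polynomial.hasseDeriv b Q := by rw [Polynomial.hasseDeriv_zero']
    have htermane : q * Polynomial.hasseDeriv b Q ≠ 0 := mul_ne_zero hq0 hbne
    have htermaval : ν (q * Polynomial.hasseDeriv b Q) = m0 := by
      rw [hν.1 _ _ hq0 hbne, hbval, hm0]; ring
    -- all other terms are strictly larger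
    have hother : ∀ cd ∈ Finset.HasAntidiagonal.antidiagonal b, cd ≠ ((0:ℕ), b) →
        Polynomial.hasseDeriv cd.1 q * Polynomial.hasseDeriv cd.2 Q ≠ 0 →
        m0 < ν (Polynomial.hasseDeriv cd.1 q * Polynomial.hasseDeriv cd.2 Q) := by
      rintro ⟨c, d⟩ hmem hne0 hne
      have hcdb : c + d = b := Finset.HasAntidiagonal.mem_antidiagonal.1 hmem
      have hc1 : 1 ≤ c := by
        rcases Nat.eq_zero_or_pos c with rfl | h
        · exact absurd (by simp [← hcdb]) hne0
        · exact h
      have hcq : Polynomial.hasseDeriv c q ≠ 0 := fun h => hne (by simp [h])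
      have hdQ : Polynomial.hasseDeriv d Q ≠ 0 := fun h => hne (by simp [h])
      have h1 := eps_bound ν q c hcq
      have h2 := eps_bound ν Q d hdQ
      rw [hν.1 _ _ hcq hdQ]
      have hc0 : (0 : ℝ) < c := by exact_mod_cast hc1
      have hsplit : (b : ℝ) * εQ = c * εQ + d * εQ := by
        have : ((c : ℝ) + d) = b := by exact_mod_cast congrArg (Nat.cast : ℕ → ℝ) hcdb
        rw [← this]; ring
      have hgap : (c : ℝ) * eps ν q < c * εQ := by
        apply mul_lt_mul_of_pos_left hεq hc0
      rw [hm0]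
      linarith
    set g' : ℕ × ℕ → Polynomial K :=
      fun cd => Polynomial.hasseDeriv cd.1 q * Polynomial.hasseDeriv cd.2 Q with hg'
    have hga : g' ((0:ℕ), b) = q * Polynomial.hasseDeriv b Q := by
      rw [hg']; exact hterma
    have hother' : ∀ cd ∈ Finset.HasAntidiagonal.antidiagonal b, cd ≠ ((0:ℕ), b) → g' cd ≠ 0 →
        ν (g' ((0:ℕ), b)) < ν (g' cd) := by
      intro cd h1 h2 h3
      rw [hga, htermaval]
      exact hother cd h1 h2 h3
    have hT := hν.sum_dom (s := Finset.HasAntidiagonal.antidiagonal b) (g := g')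
      (a := ((0:ℕ), b)) (by simp) (by rw [hga]; exact htermane) hother'
    rw [hga, htermaval] at hT
    -- handle ∂_b r
    have hrpart : Polynomial.hasseDeriv b r ≠ 0 → m0 < ν (Polynomial.hasseDeriv b r) := by
      intro hrne
      have hr0ne : r ≠ 0 := by
        intro h0
        rw [h0, map_zero] at hrne
        exact hrne rfl
      have hrval : ν (q * Q) ≤ ν r := by
        rcases hcase with h | h
        · exact absurd h hr0ne
        · exact h.2
      have hrdeg : r.natDegree < Q.natDegree := Polynomial.natDegree_lt_natDegree hr0ne hrq
      have hεr : eps ν r < εQ := hKey r hr0ne hrdeg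
      have h1 := eps_bound ν r b hrne
      have hgap : (b : ℝ) * eps ν r < b * εQ := mul_lt_mul_of_pos_left hεr hb0
      rw [hm0]
      rw [hw] at hrval
      linarith
    have hD : Polynomial.hasseDeriv b (u * v) ≠ 0 ∧ ν (Polynomial.hasseDeriv b (u * v)) = m0 := by
      rw [hDsum, ← hT.2]
      exact hν.add_dom hT.1 (fun h => hT.2.symm ▸ hrpart h)
    -- value of u*v from below
    have hPval : ν q + ν Q ≤ ν (u * v) := by
      rcases hcase with h | h
      · rw [hself, h, add_zero, hw]
      · have := hν.2 (q * Q) r (mul_ne_zero hq0 hQne) h.1 (by rw [← hself]; exact hP)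
        rw [← hself, min_eq_left h.2] at this
        rw [← hw]; exact this
    -- Leibniz bound gives the contradiction
    set E := max (eps ν u) (eps ν v) with hEdef
    have hE : E < εQ := max_lt hεu hεv
    have hLeib := eps_mul_bound hν hu hv (le_max_left _ _) (le_max_right _ _) b hD.1
    rw [hD.2, hm0] at hLeib
    nlinarith [mul_pos hb0 (sub_pos.2 hE)]
  -- now conclude
  have hrne : r ≠ 0 := fun h => main (Or.inl h)
  have hlt : ν r < ν (q * Q) := by
    rcases lt_or_ge (ν r) (ν (q * Q)) with h | h
    · exact h
    · exact absurd (Or.inr ⟨hrne, h⟩) (fun hc => main hc)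
  have hPval : (u * v) ≠ 0 ∧ ν (u * v) = ν r := by
    rw [hsum]
    exact hν.add_dom hrne (fun _ => hlt)
  exact ⟨hrne, hPval.2.symm, fun _ => by rw [hPval.2]; exact hlt⟩

end CoreLemmas
section GoodLemmas

open Polynomial

variable {ν : Polynomial K → ℝ} {Q : Polynomial K}

/-- The `Q`-expansion of `u` computes `ν u` in its constant term, all other terms
being strictly larger. -/
def GoodAt (ν : Polynomial K → ℝ) (Q u : Polynomial K) : Prop :=
  u ≠ 0 ∧ qc Q u 0 ≠ 0 ∧ ν (qc Q u 0) = ν u ∧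
    ∀ m, 1 ≤ m → qc Q u m ≠ 0 → ν u < ν (qc Q u m * Q ^ m)

theorem goodAt_small (hQm : Q.Monic) {g : Polynomial K} (hg : g ≠ 0)
    (hgd : g.degree < Q.degree) : GoodAt ν Q g := by
  refine ⟨hg, ?_, ?_, ?_⟩
  · rw [qc_small_zero hQm hgd]; exact hg
  · rw [qc_small_zero hQm hgd]
  · intro m hm hne
    obtain ⟨k, rfl⟩ := Nat.exists_eq_add_of_le hm
    rw [add_comm, qc_small_succ hQm hgd] at hne
    exact absurd rfl hne

theorem goodAt_mul (hν : IsVal ν) (hQ : IsKeyPol ν Q) {u v : Polynomial K}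
    (hu : u ≠ 0) (hud : u.natDegree < Q.natDegree) (hgv : GoodAt ν Q v) :
    GoodAt ν Q (u * v) := by
  obtain ⟨hv, hv0, hv0val, hvstrict⟩ := hgv
  have hQm := hQ.1
  have hQd := hQ.2.1
  have hQne : Q ≠ 0 := hQm.ne_zero
  have hP : u * v ≠ 0 := mul_ne_zero hu hv
  set N := v.natDegree with hN
  -- smallness of the coefficients of v
  have hsmall : ∀ i, (qc Q v i) ≠ 0 → (qc Q v i).natDegree < Q.natDegree := fun i hi =>
    Polynomial.natDegree_lt_natDegree hi (qc_degree_lt hQm v i)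
  -- expansion of u * v
  have hexp : u * v = ∑ i ∈ Finset.range (N + 1), (u * qc Q v i) * Q ^ i := by
    conv_lhs => rw [← qc_sum_eq hQm hQd N v le_rfl]
    rw [Finset.mul_sum]
    exact Finset.sum_congr rfl (fun i _ => by ring)
  -- the coefficients of u * v
  have hqcj : ∀ j, qc Q (u * v) j =
      ∑ i ∈ Finset.range (N + 1), (if i ≤ j then qc Q (u * qc Q v i) (j - i) else 0) := by
    intro j
    rw [hexp, qc_sum' hQm]
    exact Finset.sum_congr rfl (fun i _ => qc_mul_pow hQm _ i j)
  -- per-term facts coming from prod_pkg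
  have hpkg : ∀ i, qc Q v i ≠ 0 →
      qc Q (u * qc Q v i) 0 ≠ 0 ∧ ν (qc Q (u * qc Q v i) 0) = ν (u * qc Q v i) ∧
      (qc Q (u * qc Q v i) 1 ≠ 0 → ν (u * qc Q v i) < ν (qc Q (u * qc Q v i) 1 * Q)) :=
    fun i hi => prod_pkg hν hQ hu hi hud (hsmall i hi)
  -- terms with index ≥ 2 vanish
  have hhi : ∀ i m, 2 ≤ m → qc Q (u * qc Q v i) m = 0 := by
    intro i m hm
    by_contra hne
    have hvine : qc Q v i ≠ 0 := by
      intro h0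
      rw [h0, mul_zero] at hne
      exact hne (qc_zero_poly Q m)
    obtain ⟨h1, _⟩ := qc_ne_zero_imp hQm hQd m hne
    have h2 : (u * qc Q v i).natDegree ≤ u.natDegree + (qc Q v i).natDegree :=
      Polynomial.natDegree_mul_le
    have h3 := hsmall i hvine
    nlinarith [hQd, hud]
  constructor
  · exact hP
  have hzero : qc Q (u * v) 0 = qc Q (u * qc Q v 0) 0 := by
    rw [hqcj 0]
    rw [Finset.sum_eq_single_of_mem 0 (Finset.mem_range.2 (by omega))]
    · simp
    · intro i _ hine
      rw [if_neg (by omega)]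
  have hval0 : ν (u * qc Q v 0) = ν (u * v) := by
    rw [hν.1 u _ hu hv0, hv0val, ← hν.1 u v hu hv]
  refine ⟨?_, ?_, ?_⟩
  · rw [hzero]; exact (hpkg 0 hv0).1
  · rw [hzero, (hpkg 0 hv0).2.1, hval0]
  · -- strict bounds for m ≥ 1
    intro m hm hne
    have hqcne : qc Q (u * v) m ≠ 0 := hne
    have hbound : ν (u * v) - m * ν Q < ν (qc Q (u * v) m) := by
      rw [hqcj m]
      apply hν.sum_lt _ (by rw [← hqcj m]; exact hqcne)
      intro i _ hit
      rw [ne_eq, ite_eq_right_iff, not_forall] at hit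
      obtain ⟨him, hqne⟩ := hit
      rw [if_pos him]
      have hvine : qc Q v i ≠ 0 := by
        intro h0
        rw [h0, mul_zero] at hqne
        exact hqne (qc_zero_poly Q (m - i))
      -- m - i ∈ {0, 1}
      have hmi : m - i = 0 ∨ m - i = 1 := by
        rcases Nat.lt_or_ge (m - i) 2 with h | h
        · omega
        · exact absurd (hhi i (m - i) h) hqne
      obtain ⟨hp1, hp2, hp3⟩ := hpkg i hvine
      have huvi : ν (u * qc Q v i) = ν u + ν (qc Q v i) := hν.1 u _ hu hvine
      rcases hmi with h0 | h1
      · -- i = m ≥ 1 : use strictness of v's expansion at m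
        have him' : i = m := by omega
        subst him'
        rw [h0, hp2, huvi]
        have hstr := hvstrict i hm hvine
        rw [hν.val_mul_pow hvine hQne i] at hstr
        have hvv : ν (u * v) = ν u + ν v := hν.1 u v hu hv
        linarith
      · -- m = i + 1 : use strictness from prod_pkg
        rw [h1]
        have hlt := hp3 (h1 ▸ hqne)
        rw [hν.1 _ Q (h1 ▸ hqne) hQne] at hlt
        rw [huvi] at hlt
        have hvge : ν u + ν (qc Q v i) + i * ν Q ≥ ν (u * v) := by
          have hvv : ν (u * v) = ν u + ν v := hν.1 u v hu hv
          rcases Nat.eq_zero_or_pos i with rfl | hi1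
          · have h00 : ν (qc Q v 0) = ν v := hv0val
            simp only [Nat.cast_zero, zero_mul, add_zero]
            linarith
          · have := hvstrict i hi1 hvine
            rw [hν.val_mul_pow hvine hQne i] at this
            linarith
        have hmi1 : (m : ℝ) = i + 1 := by
          have h' : m = i + 1 := by omega
          exact_mod_cast congrArg (Nat.cast : ℕ → ℝ) h'
        have hmQ : (m : ℝ) * ν Q = i * ν Q + ν Q := by rw [hmi1]; ring
        linarith
    rw [hν.val_mul_pow hqcne hQne m]
    linarith

end GoodLemmas
section Good2

open Polynomial

variable {ν : Polynomial K → ℝ} {Q : Polynomial K}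

theorem deg_lt_helper {p q : Polynomial K} (hq : q ≠ 0) (h : p.natDegree < q.natDegree) :
    p.degree < q.degree := by
  rcases eq_or_ne p 0 with rfl | hp
  · rw [Polynomial.degree_zero]
    exact bot_lt_iff_ne_bot.2 fun hc => hq (Polynomial.degree_eq_bot.1 hc)
  · rw [Polynomial.degree_eq_natDegree hp, Polynomial.degree_eq_natDegree hq]
    exact_mod_cast h

theorem goodAt_pow_mul (hν : IsVal ν) (hQ : IsKeyPol ν Q) {c h : Polynomial K}
    (hc : c ≠ 0) (hcd : c.natDegree < Q.natDegree) (hh : h ≠ 0)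
    (hhd : h.natDegree < Q.natDegree) (C : ℕ) (hC : (C : Polynomial K) ≠ 0) (e : ℕ) :
    GoodAt ν Q ((C : Polynomial K) * (c * h ^ e)) := by
  have hCd : (C : Polynomial K).natDegree < Q.natDegree := by
    rw [Polynomial.natDegree_natCast]; exact hQ.2.1
  induction e with
  | zero =>
    have heq : (C : Polynomial K) * (c * h ^ 0) = (C : Polynomial K) * c := by ring
    rw [heq]
    exact goodAt_mul hν hQ hC hCd (goodAt_small hQ.1 hc (deg_lt_helper hQ.1.ne_zero hcd))
  | succ e ih =>
    have heq : (C : Polynomial K) * (c * h ^ (e + 1)) = h * ((C : Polynomial K) * (c * h ^ e)) := by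
      ring
    rw [heq]
    exact goodAt_mul hν hQ hh hhd ih

end Good2

/-- For key polynomials of the same degree with `ν Q₁ ≤ ν Q₂`:
`ν_{Q₁}(f) ≤ ν_{Q₂}(f) ≤ ν(f)` and `δ_{Q₂}(f) ≤ δ_{Q₁}(f)`. -/
theorem nuQ_mono (ν : Polynomial K → ℝ) (hν : IsVal ν)
    (Q₁ Q₂ : Polynomial K) (hQ₁ : IsKeyPol ν Q₁) (hQ₂ : IsKeyPol ν Q₂)
    (hdeg : Q₁.natDegree = Q₂.natDegree) (hval : ν Q₁ ≤ ν Q₂)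
    (f : Polynomial K) (hf : f ≠ 0) :
    nuQ ν Q₁ f ≤ nuQ ν Q₂ f ∧ nuQ ν Q₂ f ≤ ν f ∧
      deltaQ ν Q₂ f ≤ deltaQ ν Q₁ f := by
  classical
  have hQm1 := hQ₁.1
  have hQd1 := hQ₁.2.1
  have hQm2 := hQ₂.1
  have hQd2 := hQ₂.2.1
  have hQ1ne : Q₁ ≠ 0 := hQm1.ne_zero
  have hQ2ne : Q₂ ≠ 0 := hQm2.ne_zero
  have hb2 : nuQ ν Q₂ f ≤ ν f := nuQ_le_val hν hQm2 hQd2 hf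
  by_cases hQe : Q₂ = Q₁
  · rw [hQe] at hb2 ⊢
    exact ⟨le_refl _, hb2, le_refl _⟩
  -- setup
  set h := Q₂ - Q₁ with hhdef
  have hh0 : h ≠ 0 := sub_ne_zero.2 hQe
  have hQ21 : Q₂ = Q₁ + h := by rw [hhdef]; ring
  have hdd : Q₂.degree = Q₁.degree := by
    rw [Polynomial.degree_eq_natDegree hQ1ne, Polynomial.degree_eq_natDegree hQ2ne, hdeg]
  have hhd : h.degree < Q₁.degree := by
    rw [← hdd]
    exact Polynomial.degree_sub_lt hdd hQ2ne (hQm2.leadingCoeff.trans hQm1.leadingCoeff.symm)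
  have hhdn : h.natDegree < Q₁.natDegree := Polynomial.natDegree_lt_natDegree hh0 hhd
  have hνh : ν Q₁ ≤ ν h := by
    have h1 : h = Q₂ + -Q₁ := by rw [hhdef]; ring
    have h2 := hν.2 Q₂ (-Q₁) hQ2ne (neg_ne_zero.2 hQ1ne) (by rw [← h1]; exact hh0)
    rw [← h1, hν.val_neg hQ1ne] at h2
    calc ν Q₁ = min (ν Q₂) (ν Q₁) := (min_eq_right hval).symm
    _ ≤ ν h := h2
  set N := f.natDegree with hN
  -- smallness of Q₂-coefficients with respect to Q₁
  have hsmall2 : ∀ j, qc Q₂ f j ≠ 0 → (qc Q₂ f j).natDegree < Q₁.natDegree := by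
    intro j hj
    have := Polynomial.natDegree_lt_natDegree hj (qc_degree_lt hQm2 f j)
    omega
  -- the minimizing data
  set φ : ℕ → ℝ := fun j => ν (qc Q₂ f j) + j * ν Q₁ with hφ
  have hφdef : ∀ j : ℕ, φ j = ν (qc Q₂ f j) + j * ν Q₁ := fun _ => rfl
  set WS : Finset ℕ := (Finset.range (N + 1)).filter (fun j => qc Q₂ f j ≠ 0) with hWS
  have hWSmem : ∀ j, qc Q₂ f j ≠ 0 → j ∈ WS := by
    intro j hj
    rw [hWS, Finset.mem_filter, Finset.mem_range]
    exact ⟨by have := qc_idx_le hQm2 hQd2 hj; omega, hj⟩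
  have hWSne : WS.Nonempty := by
    obtain ⟨i, hi, _⟩ := (nuQ_spec (ν := ν) hQm2 hQd2 hf).1
    exact ⟨i, hWSmem i hi⟩
  set w : ℝ := (WS.image φ).min' (hWSne.image φ) with hw
  have hwmin : ∀ j, qc Q₂ f j ≠ 0 → w ≤ φ j := by
    intro j hj
    exact Finset.min'_le _ _ (Finset.mem_image_of_mem φ (hWSmem j hj))
  have hwex : ∃ j ∈ WS, φ j = w := by
    have := Finset.min'_mem (WS.image φ) (hWSne.image φ)
    rw [Finset.mem_image] at this
    obtain ⟨j, hj1, hj2⟩ := this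
    exact ⟨j, hj1, hj2⟩
  set JS : Finset ℕ := WS.filter (fun j => φ j = w) with hJS
  have hJSne : JS.Nonempty := by
    obtain ⟨j, hj1, hj2⟩ := hwex
    exact ⟨j, by rw [hJS, Finset.mem_filter]; exact ⟨hj1, hj2⟩⟩
  set J : ℕ := JS.max' hJSne with hJ
  have hJmem' : J ∈ JS := Finset.max'_mem _ _
  have hJne : qc Q₂ f J ≠ 0 := by
    have := hJmem'
    rw [hJS, Finset.mem_filter, hWS, Finset.mem_filter] at this
    exact this.1.2
  have hJw : φ J = w := by
    have := hJmem'
    rw [hJS, Finset.mem_filter] at this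
    exact this.2
  have hJmax : ∀ j, qc Q₂ f j ≠ 0 → φ j = w → j ≤ J := by
    intro j hj1 hj2
    exact Finset.le_max' _ _ (by rw [hJS, Finset.mem_filter]; exact ⟨hWSmem j hj1, hj2⟩)
  -- the re-expansion
  set u : ℕ → ℕ → Polynomial K :=
    fun j k => ((j.choose k : ℕ) : Polynomial K) * (qc Q₂ f j * h ^ (j - k)) with hu
  have hudef : ∀ j k, u j k =
      ((j.choose k : ℕ) : Polynomial K) * (qc Q₂ f j * h ^ (j - k)) := fun _ _ => rfl
  have hbinom : ∀ j, qc Q₂ f j * Q₂ ^ j =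
      ∑ k ∈ Finset.range (j + 1), u j k * Q₁ ^ k := by
    intro j
    rw [hQ21, add_pow, Finset.mul_sum]
    refine Finset.sum_congr rfl (fun k _ => ?_)
    rw [hudef, ← hQ21]; ring
  have hfi : ∀ i, qc Q₁ f i = ∑ j ∈ Finset.range (N + 1), ∑ k ∈ Finset.range (j + 1),
      (if k ≤ i then qc Q₁ (u j k) (i - k) else 0) := by
    intro i
    conv_lhs => rw [← qc_sum_eq hQm2 hQd2 N f le_rfl]
    rw [qc_sum' hQm1]
    refine Finset.sum_congr rfl (fun j _ => ?_)
    rw [hbinom j, qc_sum' hQm1]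
    refine Finset.sum_congr rfl (fun k _ => ?_)
    exact qc_mul_pow hQm1 _ k i
  -- basic facts about u j k when a coefficient is nonzero
  have hufacts : ∀ j k m, qc Q₁ (u j k) m ≠ 0 →
      qc Q₂ f j ≠ 0 ∧ ((j.choose k : ℕ) : Polynomial K) ≠ 0 ∧ k ≤ j ∧
        GoodAt ν Q₁ (u j k) ∧
        ν (qc Q₂ f j) + ((j : ℝ) - k) * ν Q₁ ≤ ν (u j k) := by
    intro j k m hqc
    have hune : u j k ≠ 0 := by
      intro h0
      rw [h0, qc_zero_poly] at hqc
      exact hqc rfl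
    rw [hudef] at hune
    have hC : ((j.choose k : ℕ) : Polynomial K) ≠ 0 := fun h0 => hune (by rw [h0, zero_mul])
    have hcj : qc Q₂ f j ≠ 0 := fun h0 => hune (by rw [h0, zero_mul, mul_zero])
    have hkj : k ≤ j := by
      by_contra hc
      push_neg at hc
      rw [Nat.choose_eq_zero_of_lt hc] at hC
      exact hC (by push_cast; ring)
    have hgood : GoodAt ν Q₁ (u j k) :=
      goodAt_pow_mul hν hQ₁ hcj (hsmall2 j hcj) hh0 hhdn _ hC (j - k)
    refine ⟨hcj, hC, hkj, hgood, ?_⟩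
    have hCnonneg : 0 ≤ ν ((j.choose k : ℕ) : Polynomial K) := hν.natCast_nonneg hC
    have hval1 : ν (u j k) = ν ((j.choose k : ℕ) : Polynomial K) +
        (ν (qc Q₂ f j) + (j - k : ℕ) * ν h) := by
      rw [hudef]
      rw [hν.1 _ _ hC (mul_ne_zero hcj (pow_ne_zero _ hh0)), hν.val_mul_pow hcj hh0]
    have hcast : ((j - k : ℕ) : ℝ) = (j : ℝ) - k := by
      rw [Nat.cast_sub hkj]
    have hge : ((j : ℝ) - k) * ν Q₁ ≤ ((j - k : ℕ) : ℝ) * ν h := by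
      rw [hcast]
      apply mul_le_mul_of_nonneg_left hνh
      have : (k : ℝ) ≤ j := by exact_mod_cast hkj
      linarith
    linarith [hval1, hge, hCnonneg]
  -- Lemma Z : value bounds for individual re-expansion terms
  have hZ : ∀ i j k, k ≤ i → qc Q₁ (u j k) (i - k) ≠ 0 →
      (φ j ≤ ν (qc Q₁ (u j k) (i - k)) + i * ν Q₁) ∧
      (k < i → φ j < ν (qc Q₁ (u j k) (i - k)) + i * ν Q₁) := by
    intro i j k hki hqc
    obtain ⟨hcj, hC, hkj, hgood, hvu⟩ := hufacts j k (i - k) hqc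
    rcases Nat.eq_zero_or_pos (i - k) with hik | hik
    · -- i = k : equality case
      have hik' : i = k := by omega
      rw [hik] at hqc ⊢
      have := hgood.2.2.1
      rw [this]
      constructor
      · rw [hφdef]
        have : (i : ℝ) = k := by exact_mod_cast congrArg (Nat.cast : ℕ → ℝ) hik'
        rw [this]
        nlinarith [hvu]
      · intro hc; omega
    · -- k < i : strict case
      have hstrict := hgood.2.2.2 (i - k) hik hqc
      rw [hν.val_mul_pow hqc hQ1ne (i - k)] at hstrict
      have hcast : ((i - k : ℕ) : ℝ) = (i : ℝ) - k := by
        rw [Nat.cast_sub hki]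
      rw [hcast] at hstrict
      have hmain : φ j < ν (qc Q₁ (u j k) (i - k)) + i * ν Q₁ := by
        rw [hφdef]
        nlinarith [hvu, hstrict]
      exact ⟨le_of_lt hmain, fun _ => hmain⟩
  -- Lemma X : every Q₁-coefficient of f has value ≥ w - i ν Q₁
  have hX : ∀ i, qc Q₁ f i ≠ 0 → w - i * ν Q₁ ≤ ν (qc Q₁ f i) := by
    intro i hi
    rw [hfi i] at hi ⊢
    apply hν.sum_le _ hi
    intro j _ hjne
    apply hν.sum_le _ hjne
    intro k _ hkne
    rw [ne_eq, ite_eq_right_iff, not_forall] at hkne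
    obtain ⟨hki, hqne⟩ := hkne
    rw [if_pos hki]
    have hz := (hZ i j k hki hqne).1
    have hcj := (hufacts j k (i - k) hqne).1
    have hwj := hwmin j hcj
    linarith
  -- Lemma Y : the J-th Q₁-coefficient attains w exactly
  have hYmain : qc Q₁ f J ≠ 0 ∧ ν (qc Q₁ f J) = w - J * ν Q₁ := by
    have hJN : J ∈ Finset.range (N + 1) := by
      have := hWSmem J hJne
      rw [hWS, Finset.mem_filter] at this
      exact this.1
    have huJJ : u J J = qc Q₂ f J := by
      rw [hudef]
      simp [Nat.choose_self]
    have htermJJ : qc Q₁ (u J J) (J - J) = qc Q₂ f J := by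
      rw [huJJ, Nat.sub_self]
      exact qc_small_zero hQm1 (deg_lt_helper hQ1ne (hsmall2 J hJne))
    have hvalJJ : ν (qc Q₁ (u J J) (J - J)) = w - J * ν Q₁ := by
      rw [htermJJ]
      have h1 := hJw
      rw [hφdef] at h1
      linarith
    -- the inner sum at j = J
    have hinnerJ : (∑ k ∈ Finset.range (J + 1),
        (if k ≤ J then qc Q₁ (u J k) (J - k) else 0)) ≠ 0 ∧
        ν (∑ k ∈ Finset.range (J + 1),
        (if k ≤ J then qc Q₁ (u J k) (J - k) else 0)) = w - J * ν Q₁ := by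
      have hsimp : ∀ k ∈ Finset.range (J + 1),
          (if k ≤ J then qc Q₁ (u J k) (J - k) else 0) = qc Q₁ (u J k) (J - k) := by
        intro k hk
        rw [if_pos (by rw [Finset.mem_range] at hk; omega)]
      rw [Finset.sum_congr rfl hsimp]
      have hres := hν.sum_dom (s := Finset.range (J + 1))
        (g := fun k => qc Q₁ (u J k) (J - k)) (a := J)
        (Finset.self_mem_range_succ J)
        (by show qc Q₁ (u J J) (J - J) ≠ 0; rw [htermJJ]; exact hJne)
        (by
          intro k hk hkJ hkne
          show ν (qc Q₁ (u J J) (J - J)) < ν (qc Q₁ (u J k) (J - k))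
          rw [hvalJJ]
          have hk' : k < J := by rw [Finset.mem_range] at hk; omega
          have hz := (hZ J J k (le_of_lt hk') hkne).2 hk'
          rw [hφdef] at hz
          have h1 := hJw
          rw [hφdef] at h1
          linarith)
      have hgaval : ν ((fun k => qc Q₁ (u J k) (J - k)) J) = w - J * ν Q₁ := hvalJJ
      rw [hgaval] at hres
      exact hres
    -- the outer sum : terms with j ≠ J are strictly above
    have houter : ∀ j ∈ Finset.range (N + 1), j ≠ J →
        (∑ k ∈ Finset.range (j + 1), (if k ≤ J then qc Q₁ (u j k) (J - k) else 0)) ≠ 0 →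
        w - J * ν Q₁ < ν (∑ k ∈ Finset.range (j + 1),
          (if k ≤ J then qc Q₁ (u j k) (J - k) else 0)) := by
      intro j _ hjJ hsne
      apply hν.sum_lt _ hsne
      intro k _ hkne
      rw [ne_eq, ite_eq_right_iff, not_forall] at hkne
      obtain ⟨hkJ, hqne⟩ := hkne
      rw [if_pos hkJ]
      obtain ⟨hcj, _, hkj, _, _⟩ := hufacts j k (J - k) hqne
      rcases lt_or_eq_of_le hkJ with hklt | hkeq
      · -- k < J : strict from Z
        have hz := (hZ J j k hkJ hqne).2 hklt
        have hwj := hwmin j hcj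
        linarith
      · -- k = J : then j > J and φ j > w
        have hjgt : J < j := by omega
        have hφne : φ j ≠ w := fun hc2 => absurd (hJmax j hcj hc2) (by omega)
        have hφgt : w < φ j := lt_of_le_of_ne (hwmin j hcj) (Ne.symm hφne)
        have hz := (hZ J j k hkJ hqne).1
        linarith
    have hres := hν.sum_dom (s := Finset.range (N + 1))
      (g := fun j => ∑ k ∈ Finset.range (j + 1), (if k ≤ J then qc Q₁ (u j k) (J - k) else 0))
      (a := J) hJN hinnerJ.1 (by
        intro j hj hjJ hjne
        have hgJ : ν ((fun j => ∑ k ∈ Finset.range (j + 1),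
            (if k ≤ J then qc Q₁ (u j k) (J - k) else 0)) J) = w - J * ν Q₁ := hinnerJ.2
        rw [hgJ]
        exact houter j hj hjJ hjne)
    have hgJ2 : ν ((fun j => ∑ k ∈ Finset.range (j + 1),
        (if k ≤ J then qc Q₁ (u j k) (J - k) else 0)) J) = w - J * ν Q₁ := hinnerJ.2
    rw [hgJ2] at hres
    rw [hfi J]
    exact hres
  -- value of coefficient terms
  have hfiv : ∀ i, qc Q₁ f i ≠ 0 → ν (qc Q₁ f i * Q₁ ^ i) = ν (qc Q₁ f i) + i * ν Q₁ :=
    fun i hi => hν.val_mul_pow hi hQ1ne i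
  have hnu1 : nuQ ν Q₁ f = w := by
    have hle : nuQ ν Q₁ f ≤ w := by
      have h2 := (nuQ_spec (ν := ν) hQm1 hQd1 hf).2 J hYmain.1
      rw [hfiv J hYmain.1, hYmain.2] at h2
      linarith
    have hge : w ≤ nuQ ν Q₁ f := by
      obtain ⟨i, hi, heq⟩ := (nuQ_spec (ν := ν) hQm1 hQd1 hf).1
      rw [← heq, hfiv i hi]
      have := hX i hi
      linarith
    linarith
  -- part (a)
  have hparta : nuQ ν Q₁ f ≤ nuQ ν Q₂ f := by
    rw [hnu1]
    obtain ⟨i, hi, heq⟩ := (nuQ_spec (ν := ν) hQm2 hQd2 hf).1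
    rw [← heq, hν.val_mul_pow hi hQ2ne i]
    have h1 := hwmin i hi
    rw [hφdef] at h1
    have h2 : (i : ℝ) * ν Q₁ ≤ i * ν Q₂ :=
      mul_le_mul_of_nonneg_left hval (by positivity)
    linarith
  -- part (c)
  obtain ⟨hd2mem, hd2max⟩ := deltaQ_spec (ν := ν) hQm2 hQd2 hf
  obtain ⟨hd1mem, hd1max⟩ := deltaQ_spec (ν := ν) hQm1 hQd1 hf
  have hJS1 : J ∈ SQ ν Q₁ f := by
    refine ⟨hYmain.1, ?_⟩
    rw [hfiv J hYmain.1, hYmain.2, hnu1]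
    ring
  have hJle : J ≤ deltaQ ν Q₁ f := hd1max J hJS1
  have hstep1 : deltaQ ν Q₂ f ≤ J := by
    by_contra hc
    push_neg at hc
    have hcne : qc Q₂ f (deltaQ ν Q₂ f) ≠ 0 := hd2mem.1
    have hv2 : ν (qc Q₂ f (deltaQ ν Q₂ f) * Q₂ ^ (deltaQ ν Q₂ f)) = nuQ ν Q₂ f := hd2mem.2
    have hφne : φ (deltaQ ν Q₂ f) ≠ w := fun hc2 => absurd (hJmax _ hcne hc2) (by omega)
    have hφgt : w < φ (deltaQ ν Q₂ f) := lt_of_le_of_ne (hwmin _ hcne) (Ne.symm hφne)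
    have hJ2 := (nuQ_spec (ν := ν) hQm2 hQd2 hf).2 J hJne
    rw [hν.val_mul_pow hJne hQ2ne J] at hJ2
    rw [hν.val_mul_pow hcne hQ2ne (deltaQ ν Q₂ f)] at hv2
    have hJd : (J : ℝ) ≤ (deltaQ ν Q₂ f : ℝ) := by exact_mod_cast le_of_lt hc
    have hmono : (J : ℝ) * (ν Q₂ - ν Q₁) ≤ (deltaQ ν Q₂ f : ℝ) * (ν Q₂ - ν Q₁) :=
      mul_le_mul_of_nonneg_right hJd (by linarith)
    have hφJ := hJw
    rw [hφdef] at hφJ hφgt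
    nlinarith [hJ2, hv2, hφgt, hmono, hφJ]
  exact ⟨hparta, hb2, le_trans hstep1 hJle⟩
end

section
/- Let Q₁, Q₂ be key polynomials for ν of the same degree with ν(Q₁) ≤ ν(Q₂). For every nonzero f ∈ K[x], the leading coefficients of the Q₁-expansion and the Q₂-expansion of f have the same ν-value. -/
open Polynomial

variable {K : Type*} [Field K]

namespace KPolAux

open Polynomial Finset

variable {K : Type*} [Field K] {ν : Polynomial K → ℝ}

/-! ### Basic valuation lemmas -/

theorem val_one (hν : IsVal ν) : ν (1 : Polynomial K) = 0 := by
  have h := hν.1 1 1 one_ne_zero one_ne_zero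
  rw [mul_one] at h; linarith

theorem val_neg (hν : IsVal ν) {f : Polynomial K} (hf : f ≠ 0) : ν (-f) = ν f := by
  have h1 : ν ((-1 : Polynomial K) * (-1)) = ν (-1 : Polynomial K) + ν (-1 : Polynomial K) :=
    hν.1 _ _ (by norm_num) (by norm_num)
  rw [neg_mul_neg, one_mul, val_one hν] at h1
  have h2 : ν ((-1 : Polynomial K) * f) = ν (-1 : Polynomial K) + ν f := hν.1 _ _ (by norm_num) hf
  rw [neg_one_mul] at h2
  linarith

theorem val_add_eq (hν : IsVal ν) {f g : Polynomial K} (hf : f ≠ 0) (hg : g ≠ 0)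
    (hlt : ν f < ν g) : f + g ≠ 0 ∧ ν (f + g) = ν f := by
  have hne : f + g ≠ 0 := by
    intro h
    have hfg : f = -g := eq_neg_of_add_eq_zero_left h
    rw [hfg, val_neg hν hg] at hlt
    exact lt_irrefl _ hlt
  refine ⟨hne, le_antisymm ?_ ?_⟩
  · have h2 := hν.2 (f + g) (-g) hne (neg_ne_zero.mpr hg)
      (by rw [add_neg_cancel_right]; exact hf)
    rw [add_neg_cancel_right, val_neg hν hg] at h2
    rcases min_le_iff.mp h2 with h | h
    · exact h
    · linarith
  · have h1 := hν.2 f g hf hg hne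
    calc ν f = min (ν f) (ν g) := (min_eq_left hlt.le).symm
      _ ≤ ν (f + g) := h1

/-- Predicate: `R` is either zero or has value `> m`. -/
def Big (ν : Polynomial K → ℝ) (m : ℝ) (R : Polynomial K) : Prop :=
  R = 0 ∨ (R ≠ 0 ∧ m < ν R)

theorem big_zero {m : ℝ} : Big ν m (0 : Polynomial K) := Or.inl rfl

theorem big_add (hν : IsVal ν) {m : ℝ} {R S : Polynomial K}
    (hR : Big ν m R) (hS : Big ν m S) : Big ν m (R + S) := by
  rcases hR with rfl | ⟨hR0, hRv⟩
  · simpa using hS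
  rcases hS with rfl | ⟨hS0, hSv⟩
  · rw [add_zero]; exact Or.inr ⟨hR0, hRv⟩
  by_cases h : R + S = 0
  · exact Or.inl h
  · exact Or.inr ⟨h, lt_of_lt_of_le (lt_min hRv hSv) (hν.2 R S hR0 hS0 h)⟩

theorem big_sum (hν : IsVal ν) {m : ℝ} {ι : Type*} (s : Finset ι) (g : ι → Polynomial K)
    (h : ∀ i ∈ s, Big ν m (g i)) : Big ν m (∑ i ∈ s, g i) :=
  Finset.sum_induction g (Big ν m) (fun _ _ => big_add hν) big_zero h

theorem val_add_big (hν : IsVal ν) {x R : Polynomial K} (hx : x ≠ 0)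
    (h : Big ν (ν x) R) : x + R ≠ 0 ∧ ν (x + R) = ν x := by
  rcases h with rfl | ⟨h0, hv⟩
  · simpa using hx
  · exact val_add_eq hν hx h0 hv

/-- Predicate: `R` is either zero or has value `≥ m`. -/
def GeV (ν : Polynomial K → ℝ) (m : ℝ) (R : Polynomial K) : Prop := R = 0 ∨ m ≤ ν R

theorem geV_zero {m : ℝ} : GeV ν m (0 : Polynomial K) := Or.inl rfl

theorem geV_add (hν : IsVal ν) {m : ℝ} {R S : Polynomial K}
    (hR : GeV ν m R) (hS : GeV ν m S) : GeV ν m (R + S) := by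
  rcases hR with rfl | hRv
  · simpa using hS
  rcases hS with rfl | hSv
  · rw [add_zero]; exact Or.inr hRv
  by_cases h : R + S = 0
  · exact Or.inl h
  by_cases hR0 : R = 0
  · rw [hR0, zero_add]; exact Or.inr hSv
  by_cases hS0 : S = 0
  · rw [hS0, add_zero]; exact Or.inr hRv
  exact Or.inr (le_trans (le_min hRv hSv) (hν.2 R S hR0 hS0 h))

theorem geV_sum (hν : IsVal ν) {m : ℝ} {ι : Type*} (s : Finset ι) (g : ι → Polynomial K)
    (h : ∀ i ∈ s, GeV ν m (g i)) : GeV ν m (∑ i ∈ s, g i) :=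
  Finset.sum_induction g (GeV ν m) (fun _ _ => geV_add hν) geV_zero h

/-! ### Lemmas about `eps` -/

theorem eps_def (ν : Polynomial K → ℝ) (f : Polynomial K) :
    eps ν f = sSup {r : ℝ | ∃ b : ℕ, 1 ≤ b ∧ hasseDeriv b f ≠ 0 ∧
      r = (ν f - ν (hasseDeriv b f)) / b} := rfl

theorem epsSet_finite (ν : Polynomial K → ℝ) (f : Polynomial K) :
    {r : ℝ | ∃ b : ℕ, 1 ≤ b ∧ hasseDeriv b f ≠ 0 ∧
      r = (ν f - ν (hasseDeriv b f)) / b}.Finite := by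
  apply Set.Finite.subset
    (Set.Finite.image (fun b : ℕ => (ν f - ν (hasseDeriv b f)) / b)
      (Set.finite_Icc 1 f.natDegree))
  rintro r ⟨b, hb1, hbne, rfl⟩
  refine ⟨b, ⟨hb1, ?_⟩, rfl⟩
  by_contra hgt
  push_neg at hgt
  exact hbne (hasseDeriv_eq_zero_of_lt_natDegree f b hgt)

theorem le_eps (ν : Polynomial K → ℝ) (f : Polynomial K) {b : ℕ} (hb : 1 ≤ b)
    (hne : hasseDeriv b f ≠ 0) :
    (ν f - ν (hasseDeriv b f)) / b ≤ eps ν f :=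
  le_csSup (epsSet_finite ν f).bddAbove ⟨b, hb, hne, rfl⟩

theorem deriv_val_ge (ν : Polynomial K → ℝ) (f : Polynomial K) {b : ℕ}
    (hne : hasseDeriv b f ≠ 0) :
    ν f - b * eps ν f ≤ ν (hasseDeriv b f) := by
  rcases Nat.eq_zero_or_pos b with h | h
  · subst h
    simp [hasseDeriv_zero']
  · have hb : (0 : ℝ) < b := by exact_mod_cast h
    have hle := le_eps ν f h hne
    rw [div_le_iff₀ hb] at hle
    nlinarith

theorem hasseDeriv_natDegree_ne_zero {f : Polynomial K} (hf : f ≠ 0) :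
    hasseDeriv f.natDegree f ≠ 0 := by
  intro h
  have h0 : (hasseDeriv f.natDegree f).coeff 0 = 0 := by rw [h, coeff_zero]
  rw [hasseDeriv_coeff] at h0
  simp at h0
  exact hf h0

theorem exists_eps_witness (ν : Polynomial K → ℝ) {f : Polynomial K} (hf : f ≠ 0)
    (hd : 0 < f.natDegree) :
    ∃ b : ℕ, 1 ≤ b ∧ hasseDeriv b f ≠ 0 ∧ ν (hasseDeriv b f) = ν f - b * eps ν f := by
  have hne : Set.Nonempty {r : ℝ | ∃ b : ℕ, 1 ≤ b ∧ hasseDeriv b f ≠ 0 ∧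
      r = (ν f - ν (hasseDeriv b f)) / b} :=
    ⟨_, ⟨f.natDegree, hd, hasseDeriv_natDegree_ne_zero hf, rfl⟩⟩
  obtain ⟨b, hb1, hbne, hbeq⟩ := hne.csSup_mem (epsSet_finite ν f)
  refine ⟨b, hb1, hbne, ?_⟩
  have hb : (0 : ℝ) < b := by exact_mod_cast hb1
  have heq : eps ν f = (ν f - ν (hasseDeriv b f)) / b := hbeq
  rw [heq]
  field_simp
  ring

theorem eps_eq_zero_of_natDegree_zero (ν : Polynomial K → ℝ) {f : Polynomial K}
    (hd : f.natDegree = 0) : eps ν f = 0 := by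
  have hset : {r : ℝ | ∃ b : ℕ, 1 ≤ b ∧ hasseDeriv b f ≠ 0 ∧
      r = (ν f - ν (hasseDeriv b f)) / b} = ∅ := by
    rw [Set.eq_empty_iff_forall_notMem]
    rintro r ⟨b, hb1, hbne, rfl⟩
    exact hbne (hasseDeriv_eq_zero_of_lt_natDegree f b (by omega))
  rw [eps_def, hset, Real.sSup_empty]

theorem eps_key_pos {Q : Polynomial K} (hQ : IsKeyPol ν Q) : 0 < eps ν Q := by
  have h := hQ.2.2 1 one_ne_zero (by simpa using hQ.2.1)
  rwa [eps_eq_zero_of_natDegree_zero ν natDegree_one] at h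

/-- `ε(ab) < ε(Q)` whenever `a, b` are nonzero of degree less than `deg Q`. -/
theorem eps_mul_lt (hν : IsVal ν) {Q a b : Polynomial K} (hQ : IsKeyPol ν Q)
    (ha : a ≠ 0) (hb : b ≠ 0)
    (hda : a.natDegree < Q.natDegree) (hdb : b.natDegree < Q.natDegree) :
    eps ν (a * b) < eps ν Q := by
  set m : ℝ := max (eps ν a) (eps ν b) with hm
  have hmQ : m < eps ν Q := max_lt (hQ.2.2 a ha hda) (hQ.2.2 b hb hdb)
  rcases Set.eq_empty_or_nonempty {r : ℝ | ∃ b' : ℕ, 1 ≤ b' ∧ hasseDeriv b' (a * b) ≠ 0 ∧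
      r = (ν (a * b) - ν (hasseDeriv b' (a * b))) / b'} with he | hne
  · rw [eps_def, he, Real.sSup_empty]
    exact eps_key_pos hQ
  · apply lt_of_le_of_lt _ hmQ
    rw [eps_def]
    apply csSup_le hne
    rintro r ⟨b', hb'1, hb'ne, rfl⟩
    have hb'pos : (0 : ℝ) < b' := by exact_mod_cast hb'1
    rw [div_le_iff₀ hb'pos]
    have hterm : ∀ p ∈ antidiagonal b',
        GeV ν (ν a + ν b - b' * m) (hasseDeriv p.1 a * hasseDeriv p.2 b) := by
      rintro ⟨i, j⟩ hp
      by_cases h1 : hasseDeriv i a = 0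
      · exact Or.inl (by rw [h1, zero_mul])
      by_cases h2 : hasseDeriv j b = 0
      · exact Or.inl (by rw [h2, mul_zero])
      refine Or.inr ?_
      rw [hν.1 _ _ h1 h2]
      have ga := deriv_val_ge ν a h1
      have gb := deriv_val_ge ν b h2
      have e1 : (i : ℝ) * eps ν a ≤ i * m :=
        mul_le_mul_of_nonneg_left (le_max_left _ _) (by positivity)
      have e2 : (j : ℝ) * eps ν b ≤ j * m :=
        mul_le_mul_of_nonneg_left (le_max_right _ _) (by positivity)
      have hsum : (i : ℝ) + j = b' := by exact_mod_cast Finset.HasAntidiagonal.mem_antidiagonal.mp hp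
      have hexp : (b' : ℝ) * m = i * m + j * m := by rw [← hsum]; ring
      linarith
    have hgev : GeV ν (ν a + ν b - b' * m) (hasseDeriv b' (a * b)) := by
      rw [hasseDeriv_mul]
      exact geV_sum hν _ _ hterm
    rcases hgev with h0 | hge
    · exact absurd h0 hb'ne
    · have := hν.1 a b ha hb
      linarith

/-- The central non-cancellation lemma: if `a b = Q c + r` with everything of
degree `< deg Q` and `c ≠ 0`, then the remainder `r` cannot have value
`≥ ν(Qc)` (nor vanish). -/
theorem no_cancel (hν : IsVal ν) {Q a b c r : Polynomial K} (hQ : IsKeyPol ν Q)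
    (ha : a ≠ 0) (hb : b ≠ 0) (hc : c ≠ 0)
    (hda : a.natDegree < Q.natDegree) (hdb : b.natDegree < Q.natDegree)
    (hdc : c.natDegree < Q.natDegree) (hdr : r.natDegree < Q.natDegree)
    (heq : a * b = Q * c + r)
    (hvr : r = 0 ∨ ν c + ν Q ≤ ν r) : False := by
  have hQne : Q ≠ 0 := hQ.1.ne_zero
  have hab : a * b ≠ 0 := mul_ne_zero ha hb
  have hQc : Q * c ≠ 0 := mul_ne_zero hQne hc
  -- the value of `a*b` is at least that of `Q*c`
  have habv : ν Q + ν c ≤ ν (a * b) := by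
    by_cases hr0 : r = 0
    · rw [heq, hr0, add_zero, hν.1 _ _ hQne hc]
    · have hvr' := hvr.resolve_left hr0
      have h2 := hν.2 (Q * c) r hQc hr0 (by rw [← heq]; exact hab)
      rw [← heq, hν.1 _ _ hQne hc] at h2
      have hmin : min (ν Q + ν c) (ν r) = ν Q + ν c := min_eq_left (by linarith)
      linarith [hmin ▸ h2]
  -- optimal Hasse index for Q
  obtain ⟨b₀, hb₀1, hb₀ne, hb₀eq⟩ := exists_eps_witness ν hQne hQ.2.1
  have hb₀pos : (0 : ℝ) < b₀ := by exact_mod_cast hb₀1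
  -- the Hasse derivative of a*b, decomposed
  have hd : hasseDeriv b₀ (a * b) =
      (∑ ij ∈ antidiagonal b₀, hasseDeriv ij.1 Q * hasseDeriv ij.2 c) + hasseDeriv b₀ r := by
    rw [heq, map_add, hasseDeriv_mul]
  have hmem : ((b₀, 0) : ℕ × ℕ) ∈ antidiagonal b₀ := by
    rw [Finset.HasAntidiagonal.mem_antidiagonal]
    rfl
  rw [← Finset.sum_erase_add _ _ hmem] at hd
  have hd2 : hasseDeriv b₀ (a * b) = hasseDeriv b₀ Q * c +
      ((∑ ij ∈ (antidiagonal b₀).erase (b₀, 0), hasseDeriv ij.1 Q * hasseDeriv ij.2 c)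
        + hasseDeriv b₀ r) := by
    rw [hd, hasseDeriv_zero']
    ring
  have hx : hasseDeriv b₀ Q * c ≠ 0 := mul_ne_zero hb₀ne hc
  have hνx : ν (hasseDeriv b₀ Q * c) = ν Q - b₀ * eps ν Q + ν c := by
    rw [hν.1 _ _ hb₀ne hc, hb₀eq]
  -- the remaining terms are all `Big`
  have hbigS : Big ν (ν (hasseDeriv b₀ Q * c))
      (∑ ij ∈ (antidiagonal b₀).erase (b₀, 0), hasseDeriv ij.1 Q * hasseDeriv ij.2 c) := by
    apply big_sum hν
    rintro ⟨i, j⟩ hp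
    obtain ⟨hpne, hpmem⟩ := Finset.mem_erase.mp hp
    by_cases h1 : hasseDeriv i Q = 0
    · exact Or.inl (by rw [h1, zero_mul])
    by_cases h2 : hasseDeriv j c = 0
    · exact Or.inl (by rw [h2, mul_zero])
    refine Or.inr ⟨mul_ne_zero h1 h2, ?_⟩
    have hij : i + j = b₀ := Finset.HasAntidiagonal.mem_antidiagonal.mp hpmem
    have hj1 : 1 ≤ j := by
      rcases Nat.eq_zero_or_pos j with h | h
      · exfalso; apply hpne; subst h; simp at hij; rw [hij]
      · exact h
    have hjpos : (0 : ℝ) < j := by exact_mod_cast hj1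
    have gQ := deriv_val_ge ν Q h1
    have gc := deriv_val_ge ν c h2
    have hec : eps ν c < eps ν Q := hQ.2.2 c hc hdc
    have hmul : (j : ℝ) * eps ν c < j * eps ν Q := by
      exact mul_lt_mul_of_pos_left hec hjpos
    have hsplit : (b₀ : ℝ) * eps ν Q = i * eps ν Q + j * eps ν Q := by
      have : (i : ℝ) + j = b₀ := by exact_mod_cast hij
      rw [← this]; ring
    rw [hν.1 _ _ h1 h2, hνx]
    linarith
  have hbigr : Big ν (ν (hasseDeriv b₀ Q * c)) (hasseDeriv b₀ r) := by
    by_cases hr0 : hasseDeriv b₀ r = 0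
    · exact Or.inl hr0
    have hrne : r ≠ 0 := by
      rintro rfl; exact hr0 (map_zero _)
    have hvr' := hvr.resolve_left hrne
    refine Or.inr ⟨hr0, ?_⟩
    have gr := deriv_val_ge ν r hr0
    have her : eps ν r < eps ν Q := hQ.2.2 r hrne hdr
    have hmul : (b₀ : ℝ) * eps ν r < b₀ * eps ν Q := mul_lt_mul_of_pos_left her hb₀pos
    rw [hνx]
    linarith
  obtain ⟨hdne, hdval⟩ := val_add_big hν hx (big_add hν hbigS hbigr)
  rw [← hd2] at hdne hdval
  -- conclude
  have hE1 : eps ν (a * b) < eps ν Q := eps_mul_lt hν hQ ha hb hda hdb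
  have hle := le_eps ν (a * b) hb₀1 hdne
  have hlt : (ν (a * b) - ν (hasseDeriv b₀ (a * b))) / b₀ < eps ν Q := lt_of_le_of_lt hle hE1
  rw [div_lt_iff₀ hb₀pos, hdval, hνx] at hlt
  nlinarith

/-- Division package: for `a, b` nonzero of degree `< deg Q`, if the quotient of
`a b` by `Q` is nonzero, it has value strictly bigger than `ν a + ν b - ν Q`. -/
theorem package (hν : IsVal ν) {Q a b : Polynomial K} (hQ : IsKeyPol ν Q)
    (ha : a ≠ 0) (hb : b ≠ 0)
    (hda : a.natDegree < Q.natDegree) (hdb : b.natDegree < Q.natDegree)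
    (hc : (a * b) /ₘ Q ≠ 0) :
    ν a + ν b < ν ((a * b) /ₘ Q) + ν Q := by
  have hab : a * b ≠ 0 := mul_ne_zero ha hb
  have heq : a * b = Q * ((a * b) /ₘ Q) + (a * b) %ₘ Q := by
    have h := modByMonic_add_div (a * b) Q
    linear_combination -h
  have hdc : ((a * b) /ₘ Q).natDegree < Q.natDegree := by
    rw [natDegree_divByMonic _ hQ.1, natDegree_mul ha hb]
    omega
  have hdr : ((a * b) %ₘ Q).natDegree < Q.natDegree := by
    by_cases h : (a * b) %ₘ Q = 0
    · rw [h]; simpa using hQ.2.1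
    · exact natDegree_lt_natDegree h (degree_modByMonic_lt _ hQ.1)
  by_contra hcon
  push_neg at hcon
  apply no_cancel hν hQ ha hb hc hda hdb hdc hdr heq
  by_cases hr0 : (a * b) %ₘ Q = 0
  · exact Or.inl hr0
  · refine Or.inr ?_
    have he2 : a * b + -(Q * ((a * b) /ₘ Q)) = (a * b) %ₘ Q := by linear_combination heq
    have h2 := hν.2 (a * b) (-(Q * ((a * b) /ₘ Q))) hab
      (neg_ne_zero.mpr (mul_ne_zero hQ.1.ne_zero hc))
      (by rw [he2]; exact hr0)
    rw [he2, val_neg hν (mul_ne_zero hQ.1.ne_zero hc), hν.1 _ _ hQ.1.ne_zero hc] at h2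
    have := hν.1 a b ha hb
    rcases min_le_iff.mp h2 with h | h
    · linarith
    · linarith

/-! ### Division plumbing -/

theorem divByMonic_pow_succ {Q : Polynomial K} (hQ : Monic Q) (f : Polynomial K) (n : ℕ) :
    f /ₘ Q ^ (n + 1) = f /ₘ Q /ₘ Q ^ n := by
  refine (div_modByMonic_unique (f /ₘ Q /ₘ Q ^ n) (f %ₘ Q + Q * (f /ₘ Q %ₘ Q ^ n))
    (hQ.pow (n + 1)) ⟨?_, ?_⟩).1
  · have h1 := modByMonic_add_div f Q
    have h2 := modByMonic_add_div (f /ₘ Q) (Q ^ n)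
    linear_combination h1 + Q * h2
  · have hQ0 : Q ≠ 0 := hQ.ne_zero
    have hpow0 : Q ^ (n + 1) ≠ 0 := pow_ne_zero _ hQ0
    apply lt_of_le_of_lt (degree_add_le _ _)
    rw [max_lt_iff]
    constructor
    · calc degree (f %ₘ Q) < degree Q := degree_modByMonic_lt f hQ
        _ ≤ degree (Q ^ (n + 1)) := by
          rw [degree_eq_natDegree hQ0, degree_eq_natDegree hpow0, hQ.natDegree_pow]
          exact_mod_cast Nat.le_mul_of_pos_left _ (Nat.succ_pos n)
    · by_cases h0 : f /ₘ Q %ₘ Q ^ n = 0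
      · rw [h0, mul_zero, degree_zero]
        exact bot_lt_iff_ne_bot.mpr fun hb => hpow0 (degree_eq_bot.mp hb)
      · rw [degree_mul]
        have hlt : degree (f /ₘ Q %ₘ Q ^ n) < degree (Q ^ n) := degree_modByMonic_lt _ (hQ.pow n)
        have he : degree (Q ^ (n + 1)) = degree Q + degree (Q ^ n) := by
          rw [pow_succ']
          exact degree_mul
        rw [he]
        exact WithBot.add_lt_add_left (fun hb => hQ0 (degree_eq_bot.mp hb)) hlt

theorem mul_pow_divByMonic {Q : Polynomial K} (hQ : Monic Q) (Y : Polynomial K) (k : ℕ) :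
    Q ^ k * Y /ₘ Q ^ (k + 1) = Y /ₘ Q := by
  refine (div_modByMonic_unique (Y /ₘ Q) (Q ^ k * (Y %ₘ Q)) (hQ.pow (k + 1)) ⟨?_, ?_⟩).1
  · linear_combination Q ^ k * modByMonic_add_div Y Q
  · by_cases h0 : Y %ₘ Q = 0
    · rw [h0, mul_zero, degree_zero]
      exact bot_lt_iff_ne_bot.mpr fun hb => pow_ne_zero (k + 1) hQ.ne_zero (degree_eq_bot.mp hb)
    · rw [degree_mul]
      have he : degree (Q ^ (k + 1)) = degree (Q ^ k) + degree Q := by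
        rw [pow_succ]
        exact degree_mul
      rw [he]
      exact WithBot.add_lt_add_left
        (fun hb => pow_ne_zero k hQ.ne_zero (degree_eq_bot.mp hb)) (degree_modByMonic_lt Y hQ)

theorem add_divByMonic {q : Polynomial K} (hq : Monic q) (p₁ p₂ : Polynomial K) :
    (p₁ + p₂) /ₘ q = p₁ /ₘ q + p₂ /ₘ q := by
  refine (div_modByMonic_unique (p₁ /ₘ q + p₂ /ₘ q) (p₁ %ₘ q + p₂ %ₘ q) hq ⟨?_, ?_⟩).1
  · linear_combination modByMonic_add_div p₁ q + modByMonic_add_div p₂ q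
  · exact lt_of_le_of_lt (degree_add_le _ _)
      (max_lt (degree_modByMonic_lt _ hq) (degree_modByMonic_lt _ hq))

theorem neg_divByMonic {q : Polynomial K} (hq : Monic q) (p : Polynomial K) :
    (-p) /ₘ q = -(p /ₘ q) := by
  have h := add_divByMonic hq p (-p)
  rw [add_neg_cancel, zero_divByMonic] at h
  linear_combination -h

theorem qc_eq {Q : Polynomial K} (hQ : Monic Q) : ∀ (n : ℕ) (f : Polynomial K),
    qc Q f n = (f /ₘ Q ^ n) %ₘ Q
  | 0, f => by simp [qc, pow_zero, divByMonic_one]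
  | n + 1, f => by
    show qc Q (f /ₘ Q) n = _
    rw [qc_eq hQ n, divByMonic_pow_succ hQ]

theorem div_pow_ne_zero {Q f : Polynomial K} (hQ : Monic Q) (hf : f ≠ 0) {k : ℕ}
    (hk : k * Q.natDegree ≤ f.natDegree) : f /ₘ Q ^ k ≠ 0 := by
  rw [Ne, divByMonic_eq_zero_iff (hQ.pow k), not_lt,
    degree_eq_natDegree (pow_ne_zero _ hQ.ne_zero), degree_eq_natDegree hf, hQ.natDegree_pow]
  exact_mod_cast hk

theorem nat_div_bounds {dd m : ℕ} (hd : 0 < dd) :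
    (m / dd) * dd ≤ m ∧ m < (m / dd + 1) * dd := by
  constructor
  · exact Nat.div_mul_le_self m dd
  · have h1 := Nat.div_add_mod m dd
    have h2 := Nat.mod_lt m hd
    have h3 : (m / dd + 1) * dd = dd * (m / dd) + dd := by ring
    omega

theorem nat_div_sub {dd n m : ℕ} (hn : 1 ≤ n) (h1 : n * dd ≤ m)
    (h2 : m < (n + 1) * dd) : (m - dd) / dd = n - 1 := by
  apply Nat.div_eq_of_lt_le
  · have hb : (n - 1) * dd + dd = n * dd := by
      have h : n - 1 + 1 = n := by omega
      calc (n - 1) * dd + dd = ((n - 1) + 1) * dd := by ring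
        _ = n * dd := by rw [h]
    omega
  · show m - dd < (n - 1 + 1) * dd
    have hb : (n - 1 + 1) * dd = n * dd := by
      have h : n - 1 + 1 = n := by omega
      rw [h]
    have h4 : (n + 1) * dd = n * dd + dd := by ring
    have hX : dd ≤ n * dd := Nat.le_mul_of_pos_left dd (by omega)
    omega

theorem div_pow_top_deg {Q f : Polynomial K} (hQ : Monic Q) (h0 : 0 < Q.natDegree)
    (hf : f ≠ 0) :
    (f /ₘ Q ^ (f.natDegree / Q.natDegree)).natDegree < Q.natDegree := by
  rw [natDegree_divByMonic _ (hQ.pow _), hQ.natDegree_pow]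
  have h1 := Nat.div_add_mod f.natDegree Q.natDegree
  have h2 := Nat.mod_lt f.natDegree h0
  have h3 : (f.natDegree / Q.natDegree) * Q.natDegree
      = Q.natDegree * (f.natDegree / Q.natDegree) := by ring
  omega

theorem qc_top {Q f : Polynomial K} (hQ : Monic Q) (h0 : 0 < Q.natDegree) (hf : f ≠ 0) :
    qc Q f (degQ Q f) = f /ₘ Q ^ (f.natDegree / Q.natDegree) := by
  have hdq : degQ Q f = f.natDegree / Q.natDegree := rfl
  rw [hdq, qc_eq hQ]
  have hne : f /ₘ Q ^ (f.natDegree / Q.natDegree) ≠ 0 :=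
    div_pow_ne_zero hQ hf (Nat.div_mul_le_self _ _)
  apply (modByMonic_eq_self_iff hQ).2
  rw [degree_eq_natDegree hne, degree_eq_natDegree hQ.ne_zero]
  exact_mod_cast div_pow_top_deg hQ h0 hf

/-! ### The main induction -/

theorem main (hν : IsVal ν) (Q₁ Q₂ : Polynomial K) (hQ₁ : IsKeyPol ν Q₁) (hQ₂ : IsKeyPol ν Q₂)
    (hdeg : Q₁.natDegree = Q₂.natDegree) (hval : ν Q₁ ≤ ν Q₂) :
    ∀ (N : ℕ) (f : Polynomial K), f ≠ 0 → f.natDegree ≤ N →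
      ν (f /ₘ Q₁ ^ (f.natDegree / Q₁.natDegree)) = ν (f /ₘ Q₂ ^ (f.natDegree / Q₂.natDegree)) := by
  have hm₁ : Monic Q₁ := hQ₁.1
  have hm₂ : Monic Q₂ := hQ₂.1
  have hd₁ : 0 < Q₁.natDegree := hQ₁.2.1
  have small : ∀ f : Polynomial K, f.natDegree < Q₁.natDegree →
      ν (f /ₘ Q₁ ^ (f.natDegree / Q₁.natDegree))
        = ν (f /ₘ Q₂ ^ (f.natDegree / Q₂.natDegree)) := by
    intro f hfd
    have h1 : f.natDegree / Q₁.natDegree = 0 := Nat.div_eq_of_lt hfd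
    have h2 : f.natDegree / Q₂.natDegree = 0 := Nat.div_eq_of_lt (hdeg ▸ hfd)
    rw [h1, h2, pow_zero, pow_zero, divByMonic_one]
  intro N
  induction N with
  | zero =>
    intro f hf hN
    exact small f (by omega)
  | succ N IH =>
    intro f hf hN
    by_cases hsmall : f.natDegree < Q₁.natDegree
    · exact small f hsmall
    push_neg at hsmall
    set n := f.natDegree / Q₁.natDegree with hn
    have hn2 : f.natDegree / Q₂.natDegree = n := by rw [hn, hdeg]
    have hn1 : 1 ≤ n := (Nat.one_le_div_iff hd₁).2 hsmall
    obtain ⟨k, hk⟩ : ∃ k, n = k + 1 := ⟨n - 1, (Nat.succ_pred_eq_of_pos hn1).symm⟩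
    have hbounds := nat_div_bounds (m := f.natDegree) hd₁
    have hflow : n * Q₁.natDegree ≤ f.natDegree := hn ▸ hbounds.1
    have hfhigh : f.natDegree < (n + 1) * Q₁.natDegree := hn ▸ hbounds.2
    rw [hn2]
    by_cases hQeq : Q₂ = Q₁
    · rw [hQeq]
    -- the difference h = Q₂ - Q₁
    have hne : Q₂ - Q₁ ≠ 0 := sub_ne_zero.mpr hQeq
    have hdh : (Q₂ - Q₁).natDegree < Q₁.natDegree := by
      have hdd0 : degree Q₂ = degree Q₁ := by
        rw [degree_eq_natDegree hm₂.ne_zero, degree_eq_natDegree hm₁.ne_zero]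
        exact_mod_cast hdeg.symm
      have hlc : Q₂.leadingCoeff = Q₁.leadingCoeff := by
        rw [hm₁.leadingCoeff, hm₂.leadingCoeff]
      have hdd := degree_sub_lt hdd0 hm₂.ne_zero hlc
      have h2 := natDegree_lt_natDegree hne hdd
      omega
    have hvh : ν Q₁ ≤ ν (Q₂ - Q₁) := by
      by_contra hcon
      push_neg at hcon
      have h2 := val_add_eq hν hne hm₁.ne_zero hcon
      rw [show Q₂ - Q₁ + Q₁ = Q₂ from by ring] at h2
      linarith [h2.2]
    -- F = f /ₘ Q₁
    have hFne : f /ₘ Q₁ ≠ 0 := by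
      rw [Ne, divByMonic_eq_zero_iff hm₁, not_lt, degree_eq_natDegree hm₁.ne_zero,
        degree_eq_natDegree hf]
      exact_mod_cast hsmall
    have hFdeg : (f /ₘ Q₁).natDegree = f.natDegree - Q₁.natDegree := natDegree_divByMonic f hm₁
    have hsplit : f /ₘ Q₁ ^ n = f /ₘ Q₁ /ₘ Q₁ ^ k := by
      rw [hk, divByMonic_pow_succ hm₁]
    have hq₁ne : f /ₘ Q₁ ^ n ≠ 0 := div_pow_ne_zero hm₁ hf hflow
    have hq₁deg : (f /ₘ Q₁ ^ n).natDegree < Q₁.natDegree := by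
      have := div_pow_top_deg hm₁ hd₁ hf
      rwa [← hn] at this
    -- induction hypothesis applied to F
    have hFdiv : (f /ₘ Q₁).natDegree / Q₁.natDegree = k := by
      rw [hFdeg]
      have := nat_div_sub hn1 hflow hfhigh
      omega
    have hFdiv₂ : (f /ₘ Q₁).natDegree / Q₂.natDegree = k := by rw [← hdeg]; exact hFdiv
    have hIHF := IH (f /ₘ Q₁) hFne (by omega)
    rw [hFdiv, hFdiv₂] at hIHF
    have hq₁t : ν (f /ₘ Q₁ ^ n) = ν (f /ₘ Q₁ /ₘ Q₂ ^ k) := by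
      rw [hsplit]; exact hIHF
    have htne : f /ₘ Q₁ /ₘ Q₂ ^ k ≠ 0 := by
      apply div_pow_ne_zero hm₂ hFne
      rw [← hdeg, hFdeg]
      have hb : k * Q₁.natDegree + Q₁.natDegree = n * Q₁.natDegree := by
        rw [hk]; ring
      omega
    -- decomposition of f for the Q₂-division
    have hdecomp : f = (f /ₘ Q₁) * Q₂ + ((f /ₘ Q₁) * (Q₁ - Q₂) + f %ₘ Q₁) := by
      have h1 := modByMonic_add_div f Q₁
      linear_combination -h1
    have hGne : (f /ₘ Q₁) * (Q₁ - Q₂) ≠ 0 :=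
      mul_ne_zero hFne (sub_ne_zero.mpr fun hh => hQeq hh.symm)
    have hGdeg : ((f /ₘ Q₁) * (Q₁ - Q₂)).natDegree
        = (f /ₘ Q₁).natDegree + (Q₂ - Q₁).natDegree := by
      rw [natDegree_mul hFne (sub_ne_zero.mpr fun hh => hQeq hh.symm), natDegree_sub]
    have hq₂eq : f /ₘ Q₂ ^ n = f /ₘ Q₁ /ₘ Q₂ ^ k + ((f /ₘ Q₁) * (Q₁ - Q₂)) /ₘ Q₂ ^ n := by
      conv_lhs => rw [hdecomp]
      rw [add_divByMonic (hm₂.pow n), add_divByMonic (hm₂.pow n)]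
      have e1 : ((f /ₘ Q₁) * Q₂) /ₘ Q₂ ^ n = f /ₘ Q₁ /ₘ Q₂ ^ k := by
        rw [hk, divByMonic_pow_succ hm₂, mul_comm (f /ₘ Q₁) Q₂,
          mul_divByMonic_cancel_left _ hm₂]
      have e2 : (f %ₘ Q₁) /ₘ Q₂ ^ n = 0 := by
        rw [divByMonic_eq_zero_iff (hm₂.pow n)]
        calc degree (f %ₘ Q₁) < degree Q₁ := degree_modByMonic_lt f hm₁
          _ ≤ degree (Q₂ ^ n) := by
            rw [degree_eq_natDegree hm₁.ne_zero,
              degree_eq_natDegree (pow_ne_zero _ hm₂.ne_zero), hm₂.natDegree_pow, ← hdeg]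
            exact_mod_cast Nat.le_mul_of_pos_left _ (by omega)
      rw [e1, e2, add_zero]
    by_cases hW0 : ((f /ₘ Q₁) * (Q₁ - Q₂)) /ₘ Q₂ ^ n = 0
    · rw [hq₂eq, hW0, add_zero]
      exact hq₁t
    · -- the correction term is nonzero
      have hGdlow : n * Q₂.natDegree ≤ ((f /ₘ Q₁) * (Q₁ - Q₂)).natDegree := by
        by_contra hcon
        push_neg at hcon
        apply hW0
        rw [divByMonic_eq_zero_iff (hm₂.pow n), degree_eq_natDegree hGne,
          degree_eq_natDegree (pow_ne_zero _ hm₂.ne_zero), hm₂.natDegree_pow]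
        exact_mod_cast hcon
      have hGlt : ((f /ₘ Q₁) * (Q₁ - Q₂)).natDegree < f.natDegree := by
        rw [hGdeg, hFdeg]
        omega
      have hGdivn : ((f /ₘ Q₁) * (Q₁ - Q₂)).natDegree / Q₁.natDegree = n := by
        apply Nat.div_eq_of_lt_le
        · rw [hdeg]; exact hGdlow
        · show _ < (n + 1) * Q₁.natDegree
          omega
      have hGdivn₂ : ((f /ₘ Q₁) * (Q₁ - Q₂)).natDegree / Q₂.natDegree = n := by
        rw [← hdeg]; exact hGdivn
      have hIHG := IH ((f /ₘ Q₁) * (Q₁ - Q₂)) hGne (by omega)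
      rw [hGdivn, hGdivn₂] at hIHG
      -- compute the Q₁-quotient of the correction term
      have hcomp : ((f /ₘ Q₁) * (Q₁ - Q₂)) /ₘ Q₁ ^ n = -((f /ₘ Q₁ ^ n) * (Q₂ - Q₁) /ₘ Q₁) := by
        have hGalt : (f /ₘ Q₁) * (Q₁ - Q₂) = -((f /ₘ Q₁) * (Q₂ - Q₁)) := by ring
        have hFsplit := modByMonic_add_div (f /ₘ Q₁) (Q₁ ^ k)
        have hFeq : f /ₘ Q₁ = (f /ₘ Q₁) %ₘ Q₁ ^ k + Q₁ ^ k * (f /ₘ Q₁ ^ n) := by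
          rw [hsplit]
          linear_combination -hFsplit
        have hFh : (f /ₘ Q₁) * (Q₂ - Q₁) = ((f /ₘ Q₁) %ₘ Q₁ ^ k) * (Q₂ - Q₁)
            + Q₁ ^ k * ((f /ₘ Q₁ ^ n) * (Q₂ - Q₁)) := by
          linear_combination (Q₂ - Q₁) * hFeq
        rw [hGalt, neg_divByMonic (hm₁.pow n), hFh, add_divByMonic (hm₁.pow n)]
        have e3 : (((f /ₘ Q₁) %ₘ Q₁ ^ k) * (Q₂ - Q₁)) /ₘ Q₁ ^ n = 0 := by
          rw [divByMonic_eq_zero_iff (hm₁.pow n)]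
          by_cases hρ0 : (f /ₘ Q₁) %ₘ Q₁ ^ k = 0
          · rw [hρ0, zero_mul, degree_zero]
            exact bot_lt_iff_ne_bot.mpr fun hb =>
              pow_ne_zero n hm₁.ne_zero (degree_eq_bot.mp hb)
          · have hρd := natDegree_lt_natDegree hρ0
              (degree_modByMonic_lt (f /ₘ Q₁) (hm₁.pow k))
            rw [hm₁.natDegree_pow] at hρd
            rw [degree_eq_natDegree (mul_ne_zero hρ0 hne),
              degree_eq_natDegree (pow_ne_zero _ hm₁.ne_zero), hm₁.natDegree_pow,
              natDegree_mul hρ0 hne]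
            have hbr : k * Q₁.natDegree + Q₁.natDegree = n * Q₁.natDegree := by
              rw [hk]; ring
            exact_mod_cast (by omega :
              ((f /ₘ Q₁) %ₘ Q₁ ^ k).natDegree + (Q₂ - Q₁).natDegree < n * Q₁.natDegree)
        have e4 : (Q₁ ^ k * ((f /ₘ Q₁ ^ n) * (Q₂ - Q₁))) /ₘ Q₁ ^ n
            = (f /ₘ Q₁ ^ n) * (Q₂ - Q₁) /ₘ Q₁ := by
          rw [hk]
          exact mul_pow_divByMonic hm₁ _ k
        rw [e3, e4, zero_add]
      have hWne₁ : ((f /ₘ Q₁) * (Q₁ - Q₂)) /ₘ Q₁ ^ n ≠ 0 :=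
        div_pow_ne_zero hm₁ hGne (by rw [hdeg]; exact hGdlow)
      have hc₁ne : (f /ₘ Q₁ ^ n) * (Q₂ - Q₁) /ₘ Q₁ ≠ 0 := by
        intro h0
        apply hWne₁
        rw [hcomp, h0, neg_zero]
      have hpack := package hν hQ₁ hq₁ne hne hq₁deg hdh hc₁ne
      have hc₁big : ν (f /ₘ Q₁ ^ n) < ν ((f /ₘ Q₁ ^ n) * (Q₂ - Q₁) /ₘ Q₁) := by
        linarith
      have hWval : ν (((f /ₘ Q₁) * (Q₁ - Q₂)) /ₘ Q₂ ^ n)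
          = ν ((f /ₘ Q₁ ^ n) * (Q₂ - Q₁) /ₘ Q₁) := by
        rw [← hIHG, hcomp, val_neg hν hc₁ne]
      have hfinal := val_add_eq hν htne hW0
        (by rw [hWval, ← hq₁t]; exact hc₁big)
      calc ν (f /ₘ Q₁ ^ n) = ν (f /ₘ Q₁ /ₘ Q₂ ^ k) := hq₁t
        _ = ν (f /ₘ Q₁ /ₘ Q₂ ^ k + ((f /ₘ Q₁) * (Q₁ - Q₂)) /ₘ Q₂ ^ n) := (hfinal.2).symm
        _ = ν (f /ₘ Q₂ ^ n) := by rw [← hq₂eq]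

end KPolAux

/-- For key polynomials of the same degree with `ν Q₁ ≤ ν Q₂`, the leading
coefficients of the `Q₁`- and `Q₂`-expansions of `f` have the same value. -/
theorem leadingQcoeff_val_eq (ν : Polynomial K → ℝ) (hν : IsVal ν)
    (Q₁ Q₂ : Polynomial K) (hQ₁ : IsKeyPol ν Q₁) (hQ₂ : IsKeyPol ν Q₂)
    (hdeg : Q₁.natDegree = Q₂.natDegree) (hval : ν Q₁ ≤ ν Q₂)
    (f : Polynomial K) (hf : f ≠ 0) :
    ν (qc Q₁ f (degQ Q₁ f)) = ν (qc Q₂ f (degQ Q₂ f)) := by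
  rw [KPolAux.qc_top hQ₁.1 hQ₁.2.1 hf, KPolAux.qc_top hQ₂.1 hQ₂.2.1 hf]
  exact KPolAux.main hν Q₁ Q₂ hQ₁ hQ₂ hdeg hval f.natDegree f hf le_rfl
end
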